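/- arXiv:2510.17595 — 4 statements merged into one kernel-verified Lean document; each statement's English description precedes it below -/
import Mathlib

section
/- Let k ≥ 2 be an integer and consider the asymmetric grid instance (V_k, c_k, p_k). For every A ⊆ V_k with |A| ≥ 2, TSP(A, c_k) = k · max{|A ∩ C_j| : j = 1,…,k}; moreover, for every A ⊆ V_k, TSP(A, c_k) ≤ k · max{|A ∩ C_j| : j = 1,…,k}. -/
/-!
For `u ≠ w` the cost `c_k(u, w)` is the representative in `{1, …, k}` of `col w - col u`
modulo `k`.

Lower bound: fix a column `j` and put `ψ v = (col v - j) mod k ∈ [0, k)`. Every step `u → w`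
with `u ≠ w` satisfies `c_k(u, w) ≥ ψ w - ψ u + k·[w ∈ C_j]`; summed around a tour with at
least two vertices the potential telescopes, so the tour costs at least `k·|A ∩ C_j|`.

Upper bound: let `m` be the largest column size, number the vertices of `A` inside each
column by `0, 1, …` and lift `v` of rank `r` to the integer `k r + col v ∈ [0, km)`. The lifts
are distinct and congruent to the columns, so in the tour visiting `A` by increasing lift each
step costs at most the increase of the lift, and the closing step at most `km` minus the total
increase.
-/

noncomputable section

/-- The cost of a tour given as a cyclic list: the sum of `c` over consecutive pairs
(cyclically). -/
def cycCost {V : Type*} (c : V → V → ℝ) (l : List V) : ℝ :=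
  (List.zipWith c l (l.rotate 1)).sum

/-- `l` is a tour on the finite set `A`: a cyclic ordering of `A`, visiting each element
exactly once. -/
def IsTour {V : Type*} [DecidableEq V] (A : Finset V) (l : List V) : Prop :=
  l.Nodup ∧ l.toFinset = A

/-- The minimum cost of a tour on `A` with respect to `c`. -/
def TSP {V : Type*} [DecidableEq V] (c : V → V → ℝ) (A : Finset V) : ℝ :=
  sInf {x : ℝ | ∃ l : List V, IsTour A l ∧ x = cycCost c l}

/-- The cost function of the asymmetric grid instance on `Fin k × Fin k` (first coordinate:
row, second coordinate: column): the shortest-path metric of the digraph with a unit-cost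
edge from every vertex of column `j` to every vertex of column `j+1` (cyclically). -/
def gridCost (k : ℕ) (u w : Fin k × Fin k) : ℝ :=
  if u = w then 0
  else if u.2 = w.2 then (k : ℝ)
  else (((w.2.val + k - u.2.val) % k : ℕ) : ℝ)

/-- Column `j` of the asymmetric grid instance. -/
def gridColumn (k : ℕ) (j : Fin k) : Finset (Fin k × Fin k) :=
  Finset.univ.filter (fun v => v.2 = j)

open Finset

section CyclicCost

variable {V : Type*}

theorem List.exists_getElem_of_mem_zip_rotate_one {l : List V} {p : V × V}
    (hp : p ∈ l.zip (l.rotate 1)) :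
    ∃ i, ∃ hi : i < l.length,
      l[i] = p.1 ∧ l[(i + 1) % l.length]'(Nat.mod_lt _ (by omega)) = p.2 := by
  obtain ⟨n, hn, rfl⟩ := List.mem_iff_getElem.1 hp
  simp only [List.length_zip, List.length_rotate, min_self] at hn
  exact ⟨n, hn, by simp [List.getElem_rotate]⟩

theorem List.Nodup.fst_ne_snd_of_mem_zip_rotate_one {l : List V} (hl : l.Nodup)
    (hlen : 2 ≤ l.length) {p : V × V} (hp : p ∈ l.zip (l.rotate 1)) : p.1 ≠ p.2 := by
  obtain ⟨i, hi, hu, hw⟩ := List.exists_getElem_of_mem_zip_rotate_one hp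
  rw [← hu, ← hw, Ne, hl.getElem_inj_iff]
  rcases Nat.lt_or_ge (i + 1) l.length with h | h
  · rw [Nat.mod_eq_of_lt h]; omega
  · rw [show i + 1 = l.length by omega, Nat.mod_self]; omega

theorem sum_map_zip_rotate_one_fst (f : V → ℝ) (l : List V) :
    ((l.zip (l.rotate 1)).map fun p => f p.1).sum = (l.map f).sum := by
  rw [show (fun p : V × V => f p.1) = f ∘ Prod.fst from rfl, ← List.map_map,
    List.map_fst_zip (by simp)]

theorem sum_map_zip_rotate_one_snd (f : V → ℝ) (l : List V) :
    ((l.zip (l.rotate 1)).map fun p => f p.2).sum = (l.map f).sum := by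
  rw [show (fun p : V × V => f p.2) = f ∘ Prod.snd from rfl, ← List.map_map,
    List.map_snd_zip (by simp)]
  exact ((List.rotate_perm l 1).map f).sum_eq

theorem cycCost_eq_sum_map_zip (c : V → V → ℝ) (l : List V) :
    cycCost c l = ((l.zip (l.rotate 1)).map fun p => c p.1 p.2).sum := by
  rw [cycCost, List.map_zip_eq_zipWith]
  rfl

theorem cycCost_le_of_potential (c : V → V → ℝ) (φ g : V → ℝ) {l : List V}
    (h : ∀ p ∈ l.zip (l.rotate 1), c p.1 p.2 + φ p.1 ≤ φ p.2 + g p.2) :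
    cycCost c l ≤ (l.map g).sum := by
  have := List.sum_le_sum (f := fun p : V × V => c p.1 p.2 + φ p.1)
    (g := fun p : V × V => φ p.2 + g p.2) h
  rw [List.sum_map_add, List.sum_map_add, sum_map_zip_rotate_one_fst,
    sum_map_zip_rotate_one_snd, sum_map_zip_rotate_one_snd, ← cycCost_eq_sum_map_zip] at this
  linarith

theorem sum_map_le_cycCost_of_potential (c : V → V → ℝ) (φ g : V → ℝ) {l : List V}
    (h : ∀ p ∈ l.zip (l.rotate 1), φ p.2 + g p.2 ≤ c p.1 p.2 + φ p.1) :
    (l.map g).sum ≤ cycCost c l := by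
  have := List.sum_le_sum (f := fun p : V × V => φ p.2 + g p.2)
    (g := fun p : V × V => c p.1 p.2 + φ p.1) h
  rw [List.sum_map_add, List.sum_map_add, sum_map_zip_rotate_one_fst,
    sum_map_zip_rotate_one_snd, sum_map_zip_rotate_one_snd, ← cycCost_eq_sum_map_zip] at this
  linarith

theorem cycCost_nonneg {c : V → V → ℝ} (hc : ∀ u w, 0 ≤ c u w) (l : List V) :
    0 ≤ cycCost c l := by
  rw [cycCost_eq_sum_map_zip]
  exact List.sum_nonneg (by simp only [List.mem_map]; rintro _ ⟨p, -, rfl⟩; exact hc _ _)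

variable [DecidableEq V] {c : V → V → ℝ} {A : Finset V}

theorem TSP_le_cycCost (hc : ∀ u w, 0 ≤ c u w) {l : List V} (hl : IsTour A l) :
    TSP c A ≤ cycCost c l :=
  csInf_le ⟨0, by rintro _ ⟨l', -, rfl⟩; exact cycCost_nonneg hc l'⟩ ⟨l, hl, rfl⟩

theorem le_TSP {x : ℝ} {l : List V} (hl : IsTour A l)
    (h : ∀ l', IsTour A l' → x ≤ cycCost c l') : x ≤ TSP c A :=
  le_csInf ⟨_, l, hl, rfl⟩ (by rintro _ ⟨l', hl', rfl⟩; exact h l' hl')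

theorem exists_isTour_pairwise_lt {β : Type*} [LinearOrder β] (A : Finset V) {P : V → β}
    (hP : Set.InjOn P A) : ∃ l, IsTour A l ∧ l.Pairwise fun u w => P u < P w := by
  set l := A.toList.mergeSort fun u w => P u ≤ P w
  have hperm : l.Perm A.toList := List.mergeSort_perm _ _
  have hnodup : l.Nodup := hperm.nodup_iff.2 A.nodup_toList
  have hmem : ∀ v, v ∈ l ↔ v ∈ A := fun v => by simp [l]
  refine ⟨l, ⟨hnodup, by ext v; simp [hmem]⟩, ?_⟩
  have hsorted := List.pairwise_mergeSort (le := fun u w => decide (P u ≤ P w))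
    (fun _ _ _ h₁ h₂ => by simp only [decide_eq_true_eq] at *; exact h₁.trans h₂)
    (fun u w => by simpa using le_total (P u) (P w)) A.toList
  refine (hsorted.and hnodup).imp_of_mem fun hu hw ⟨hle, hne⟩ => ?_
  exact (of_decide_eq_true hle).lt_of_ne fun h => hne (hP ((hmem _).1 hu) ((hmem _).1 hw) h)

end CyclicCost

theorem Int.emod_le_of_nonneg {a : ℤ} (ha : 0 ≤ a) (n : ℕ) : a % n ≤ a := by
  have hdiv : 0 ≤ a / n := Int.ediv_nonneg ha (by positivity)
  nlinarith [Int.emod_add_mul_ediv a n]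

/-- The representative of `x` modulo `k` in `{1, …, k}`. -/
def posResidue (k : ℕ) (x : ℤ) : ℤ := (x - 1) % k + 1

section PosResidue

variable {k : ℕ} {x : ℤ}

theorem posResidue_modEq : posResidue k x ≡ x [ZMOD k] := by
  simpa [posResidue] using ((Int.mod_modEq (x - 1) k).add_right 1)

theorem posResidue_pos (hk : 0 < k) : 0 < posResidue k x := by
  have := Int.emod_nonneg (x - 1) (b := k) (by positivity)
  rw [posResidue]; omega

theorem posResidue_le {d : ℤ} (hd : 0 < d) (h : d ≡ x [ZMOD k]) : posResidue k x ≤ d := by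
  have hmod : (x - 1) % k = (d - 1) % k := (h.sub_right 1).symm
  have := Int.emod_le_of_nonneg (a := d - 1) (by omega) k
  rw [posResidue, hmod]; omega

end PosResidue

section GridCost

variable {k : ℕ} {u w : Fin k × Fin k}

theorem gridCost_nonneg (u w : Fin k × Fin k) : 0 ≤ gridCost k u w := by
  unfold gridCost; split_ifs <;> positivity

theorem gridCost_of_ne (h : u ≠ w) : gridCost k u w = posResidue k ((w.2 : ℤ) - u.2) := by
  have hk : 0 < k := u.2.pos
  have hu := u.2.isLt
  have hw := w.2.isLt
  rw [gridCost, if_neg h, posResidue]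
  split_ifs with hc
  · rw [hc, sub_self, zero_sub, show (-1 : ℤ) = (k - 1) + k * (-1) by ring,
      Int.add_mul_emod_self_left, Int.emod_eq_of_lt (by omega) (by omega)]
    push_cast; ring
  · have hne : (u.2 : ℕ) ≠ w.2 := fun h => hc (Fin.ext h)
    rw [← Int.cast_natCast]
    congr 1
    push_cast [Nat.cast_sub (show (u.2 : ℕ) ≤ w.2 + k by omega)]
    rcases lt_or_gt_of_ne hne with hlt | hlt
    · rw [show (w.2 : ℤ) + k - u.2 = (w.2 - u.2) + k * 1 by ring, Int.add_mul_emod_self_left,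
        Int.emod_eq_of_lt (by omega) (by omega), Int.emod_eq_of_lt (by omega) (by omega)]
      ring
    · rw [show (w.2 : ℤ) - u.2 - 1 = (w.2 + k - u.2 - 1) + k * (-1) by ring,
        Int.add_mul_emod_self_left, Int.emod_eq_of_lt (by omega) (by omega),
        Int.emod_eq_of_lt (by omega) (by omega)]
      ring

theorem gridCost_le_sub {a b : ℤ} (ha : a ≡ u.2 [ZMOD k]) (hb : b ≡ w.2 [ZMOD k])
    (hab : a < b) : gridCost k u w ≤ b - a := by
  by_cases h : u = w
  · simp only [gridCost, if_pos h]
    exact_mod_cast (sub_pos.2 hab).le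
  · rw [gridCost_of_ne h]
    exact_mod_cast posResidue_le (by omega) (hb.sub ha)

end GridCost

section LowerBound

variable {k : ℕ}

def columnOffset (k : ℕ) (j : Fin k) (v : Fin k × Fin k) : ℤ := ((v.2 : ℤ) - j) % k

theorem columnOffset_add_le_gridCost_add (j : Fin k) {u w : Fin k × Fin k} (h : u ≠ w) :
    (columnOffset k j w : ℝ) + (if w.2 = j then (k : ℝ) else 0) ≤
      gridCost k u w + columnOffset k j u := by
  have hk : 0 < k := u.2.pos
  rw [gridCost_of_ne h]
  set d := posResidue k ((w.2 : ℤ) - u.2) + columnOffset k j u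
  have hd : d ≡ (w.2 : ℤ) - j [ZMOD k] := by
    have := (posResidue_modEq (x := (w.2 : ℤ) - u.2)).add (Int.mod_modEq ((u.2 : ℤ) - j) k)
    rwa [sub_add_sub_cancel] at this
  have hdpos : 0 < d :=
    add_pos_of_pos_of_nonneg (posResidue_pos hk) (Int.emod_nonneg _ (by positivity))
  split_ifs with hw
  · have hdvd : (k : ℤ) ∣ d := Int.modEq_zero_iff_dvd.1 (by simpa [hw] using hd)
    have hw0 : columnOffset k j w = 0 := by simp [columnOffset, hw]
    rw [hw0, Int.cast_zero, zero_add, ← Int.cast_add, ← Int.cast_natCast, Int.cast_le]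
    exact Int.le_of_dvd hdpos hdvd
  · rw [add_zero, ← Int.cast_add, Int.cast_le, columnOffset, ← hd]
    exact Int.emod_le_of_nonneg hdpos.le k

theorem mul_card_inter_gridColumn_le_cycCost {A : Finset (Fin k × Fin k)}
    {l : List (Fin k × Fin k)} (hl : IsTour A l) (hA : 2 ≤ #A) (j : Fin k) :
    (k : ℝ) * #(A ∩ gridColumn k j) ≤ cycCost (gridCost k) l := by
  have hlen : 2 ≤ l.length := by rwa [← hl.2, List.toFinset_card_of_nodup hl.1] at hA
  calc (k : ℝ) * #(A ∩ gridColumn k j)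
      = (l.map fun w => if w.2 = j then (k : ℝ) else 0).sum := by
        rw [← List.sum_toFinset _ hl.1, hl.2, Finset.sum_ite, sum_const_zero, add_zero,
          sum_const, nsmul_eq_mul, mul_comm]
        congr 3
        ext v
        simp [gridColumn]
    _ ≤ cycCost (gridCost k) l :=
        sum_map_le_cycCost_of_potential _ (fun v => (columnOffset k j v : ℝ)) _ fun _ hp =>
          columnOffset_add_le_gridCost_add j (hl.1.fst_ne_snd_of_mem_zip_rotate_one hlen hp)

end LowerBound

section UpperBound

variable {k : ℕ}

theorem cycCost_le_of_pairwise_lt {a : Fin k × Fin k} {t : List (Fin k × Fin k)}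
    (P : Fin k × Fin k → ℤ) (hP : ∀ v, P v ≡ v.2 [ZMOD k]) {L : ℤ} (hL : (k : ℤ) ∣ L)
    (hsorted : (a :: t).Pairwise fun u w => P u < P w) (hspan : ∀ u ∈ a :: t, P u < P a + L) :
    cycCost (gridCost k) (a :: t) ≤ L := by
  have hL0 : 0 < L := by linarith [hspan a List.mem_cons_self]
  have ha : a ∉ t := fun h => lt_irrefl _ (List.rel_of_pairwise_cons hsorted h)
  have hgain : ((a :: t).map fun w => if w = a then (L : ℝ) else 0).sum = L := by
    rw [List.map_cons, List.sum_cons, if_pos rfl, List.sum_eq_zero, add_zero]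
    simp only [List.mem_map]
    rintro _ ⟨w, hw, rfl⟩
    exact if_neg (ne_of_mem_of_not_mem hw ha)
  rw [← hgain]
  refine cycCost_le_of_potential _ (fun v => (P v : ℝ)) _ fun p hp => ?_
  obtain ⟨i, hi, hu, hw⟩ := List.exists_getElem_of_mem_zip_rotate_one hp
  rcases Nat.lt_or_ge (i + 1) (a :: t).length with hlt | hge
  · have hlift : P p.1 < P p.2 := by
      rw [← hu, ← hw]
      exact List.pairwise_iff_getElem.1 hsorted _ _ _ _ (by rw [Nat.mod_eq_of_lt hlt]; omega)
    have hcost := gridCost_le_sub (hP p.1) (hP p.2) hlift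
    have hL0' : (0 : ℝ) < L := by exact_mod_cast hL0
    split_ifs <;> linarith
  · have hwa : p.2 = a := by
      have h0 : (i + 1) % (a :: t).length = 0 := by
        rw [show i + 1 = (a :: t).length by omega, Nat.mod_self]
      rw [← hw]
      simp only [h0, List.getElem_cons_zero]
    have hb : P a + L ≡ a.2 [ZMOD k] := by
      simpa using (hP a).add (Int.modEq_zero_iff_dvd.2 hL)
    have hcost := gridCost_le_sub (hP p.1) hb (hspan p.1 (hu ▸ List.getElem_mem _))
    rw [hwa, if_pos rfl]
    push_cast at hcost
    linarith

def maxColumnCard (k : ℕ) (A : Finset (Fin k × Fin k)) : ℕ :=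
  univ.sup fun j => #(A ∩ gridColumn k j)

def columnRank (A : Finset (Fin k × Fin k)) (v : Fin k × Fin k) : ℕ :=
  #(A.filter fun w => w.2 = v.2 ∧ w.1 < v.1)

/-- `v` lifted to the `columnRank`-th turn around the columns. -/
def liftedPos (A : Finset (Fin k × Fin k)) (v : Fin k × Fin k) : ℕ :=
  k * columnRank A v + v.2

variable {A : Finset (Fin k × Fin k)} {v v' : Fin k × Fin k}

theorem columnRank_lt_card_inter_gridColumn (hv : v ∈ A) :
    columnRank A v < #(A ∩ gridColumn k v.2) := by
  refine card_lt_card ((ssubset_iff_of_subset fun w hw => ?_).2 ⟨v, ?_, ?_⟩)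
  · simp only [mem_filter] at hw
    simp [gridColumn, hw]
  · simp [gridColumn, hv]
  · simp

theorem columnRank_lt_columnRank (hv : v ∈ A) (hcol : v.2 = v'.2)
    (hrow : v.1 < v'.1) : columnRank A v < columnRank A v' := by
  refine card_lt_card ((ssubset_iff_of_subset fun w hw => ?_).2 ⟨v, ?_, ?_⟩)
  · simp only [mem_filter] at hw ⊢
    exact ⟨hw.1, hw.2.1.trans hcol, hw.2.2.trans hrow⟩
  · simp [hv, hcol, hrow]
  · simp

theorem liftedPos_injOn : Set.InjOn (liftedPos A) A := by
  intro v hv v' hv' h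
  have hk : 0 < k := v.2.pos
  have hcol : v.2 = v'.2 := Fin.ext <| by
    simpa [liftedPos, Nat.mul_add_mod, Nat.mod_eq_of_lt] using congrArg (· % k) h
  have hrank : columnRank A v = columnRank A v' := by
    simp only [liftedPos, hcol] at h
    exact Nat.eq_of_mul_eq_mul_left hk (Nat.add_right_cancel h)
  refine Prod.ext ?_ hcol
  rcases lt_trichotomy v.1 v'.1 with hrow | hrow | hrow
  · exact absurd hrank (columnRank_lt_columnRank hv hcol hrow).ne
  · exact hrow
  · exact absurd hrank (columnRank_lt_columnRank hv' hcol.symm hrow).ne'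

theorem liftedPos_lt (hv : v ∈ A) : liftedPos A v < k * maxColumnCard k A := by
  have hrank : columnRank A v + 1 ≤ maxColumnCard k A :=
    (columnRank_lt_card_inter_gridColumn hv).trans_le
      (le_sup (f := fun j => #(A ∩ gridColumn k j)) (mem_univ v.2))
  calc liftedPos A v < k * columnRank A v + k := by simp [liftedPos]
    _ = k * (columnRank A v + 1) := by ring
    _ ≤ k * maxColumnCard k A := Nat.mul_le_mul_left k hrank

theorem exists_isTour_cycCost_le (A : Finset (Fin k × Fin k)) :
    ∃ l, IsTour A l ∧ cycCost (gridCost k) l ≤ k * maxColumnCard k A := by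
  obtain ⟨l, hl, hsorted⟩ := exists_isTour_pairwise_lt A (liftedPos_injOn (A := A))
  refine ⟨l, hl, ?_⟩
  rcases l with _ | ⟨a, t⟩
  · rw [show cycCost (gridCost k) [] = 0 from rfl]
    positivity
  have hmem : ∀ v ∈ a :: t, v ∈ A := fun v hv => hl.2 ▸ List.mem_toFinset.2 hv
  have hP : ∀ v, (liftedPos A v : ℤ) ≡ v.2 [ZMOD k] := fun v => by simp [liftedPos, Int.ModEq]
  have hspan : ∀ u ∈ a :: t, (liftedPos A u : ℤ) < liftedPos A a + k * maxColumnCard k A :=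
    fun u hu => by have := liftedPos_lt (hmem u hu); omega
  exact_mod_cast cycCost_le_of_pairwise_lt _ hP (Dvd.intro _ rfl) (hsorted.imp Nat.cast_lt.2) hspan

end UpperBound

theorem statement2_general (k : ℕ) (A : Finset (Fin k × Fin k)) :
    (2 ≤ A.card →
      TSP (gridCost k) A =
        (k : ℝ) * ((Finset.univ.sup fun j : Fin k => (A ∩ gridColumn k j).card : ℕ) : ℝ)) ∧
    TSP (gridCost k) A ≤
      (k : ℝ) * ((Finset.univ.sup fun j : Fin k => (A ∩ gridColumn k j).card : ℕ) : ℝ) := by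
  obtain ⟨l, hl, hcost⟩ := exists_isTour_cycCost_le A
  have hle : TSP (gridCost k) A ≤ k * maxColumnCard k A :=
    (TSP_le_cycCost gridCost_nonneg hl).trans hcost
  refine ⟨fun hA => hle.antisymm ?_, hle⟩
  obtain ⟨v, -⟩ := card_pos.1 (by omega : 0 < #A)
  obtain ⟨j, -, hj⟩ :=
    exists_mem_eq_sup univ ⟨v.2, mem_univ _⟩ fun j => #(A ∩ gridColumn k j)
  rw [maxColumnCard, hj]
  exact le_TSP hl fun l' hl' => mul_card_inter_gridColumn_le_cycCost hl' hA j

/-- for the asymmetric grid instance, `TSP(A, c_k) = k · max_j |A ∩ C_j|`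
whenever `|A| ≥ 2`, and `TSP(A, c_k) ≤ k · max_j |A ∩ C_j|` for every `A`. -/
theorem statement2 (k : ℕ) (hk : 2 ≤ k) (A : Finset (Fin k × Fin k)) :
    (2 ≤ A.card →
      TSP (gridCost k) A =
        (k : ℝ) * ((Finset.univ.sup fun j : Fin k => (A ∩ gridColumn k j).card : ℕ) : ℝ)) ∧
    TSP (gridCost k) A ≤
      (k : ℝ) * ((Finset.univ.sup fun j : Fin k => (A ∩ gridColumn k j).card : ℕ) : ℝ) :=
  statement2_general k A

end
end

section
/- Let V be a finite set, let c : V × V → ℝ≥0 satisfy c(v,v) = 0 for all v ∈ V and the triangle inequality c(x,z) ≤ c(x,y) + c(y,z) for all x,y,z ∈ V, and let k ≥ 1. (i) Let W be a closed walk visiting t vertices (with repetitions allowed) with k ≤ t − 2, and let W' be the closed walk obtained from W by omitting one vertex visit. Then c^{(k)}(W') ≤ c^{(k)}(W). (ii) Let W be a (non-closed) walk and let W' be the walk obtained from W by omitting one vertex visit. Then c^{(k)}(W') ≤ c^{(k)}(W). -/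
noncomputable section

/-- The `k`-hop cost of a closed walk given as a cyclic list `w_1, …, w_t`
(repeated vertices allowed): `∑_{Δ=1}^{k} ∑_{i=1}^{t} c(w_i, w_{i+Δ})`, indices mod `t`. -/
def cycHopCost {V : Type*} (c : V → V → ℝ) (k : ℕ) (l : List V) : ℝ :=
  ∑ Δ ∈ Finset.Icc 1 k, (List.zipWith c l (l.rotate Δ)).sum

/-- The `k`-hop cost of a (non-closed) walk `w_1, …, w_t` (repeated vertices allowed):
`∑_{Δ=1}^{k} ∑_{i=1}^{t-Δ} c(w_i, w_{i+Δ})`. -/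
def walkHopCost {V : Type*} (c : V → V → ℝ) (k : ℕ) (l : List V) : ℝ :=
  ∑ Δ ∈ Finset.Icc 1 k, (List.zipWith c l (l.drop Δ)).sum

/-! Deleting the visit to `v` from the walk `p ++ v :: s` turns some hops `a → v → ⋯ → s_j`
of length `k + 1` into new hops `a → s_j` of length `k`. Each new hop is paid for by the triangle
inequality `c a s_j ≤ c a v + c v s_j` with two hops of the old walk that go through `v`, and
different new hops use different old ones. For closed walks, rotate the deleted visit to the end:
the cyclic cost of `u` is the walk cost of `u ++ u.take k` minus that of `u.take k`, so deleting
the last visit of a closed walk is deleting an inner visit of an open one. -/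

lemma List.sum_zipWith_cons {α β M : Type*} [AddMonoid M] (f : α → β → M) (a : α)
    (l : List α) (m : List β) :
    (List.zipWith f (a :: l) m).sum =
      ((m.take 1).map (f a)).sum + (List.zipWith f l m.tail).sum := by
  cases m <;> simp

section

variable {V : Type*} (c : V → V → ℝ) (k : ℕ)

lemma walkHopCost_cons (a : V) (l : List V) :
    walkHopCost c k (a :: l) = walkHopCost c k l + ((l.take k).map (c a)).sum := by
  induction k with
  | zero => simp [walkHopCost]
  | succ k ih =>
    simp only [walkHopCost] at ih ⊢
    rw [Finset.sum_Icc_succ_top (by omega), Finset.sum_Icc_succ_top (by omega), ih,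
      List.drop_succ_cons, List.sum_zipWith_cons, List.tail_drop, List.take_add, List.map_append,
      List.sum_append]
    ring

lemma sum_map_take_succ_add_le (hc0 : ∀ x y, 0 ≤ c x y)
    (htri : ∀ x y z, c x z ≤ c x y + c y z) (a v : V) :
    ∀ (s : List V) (j : ℕ), ((s.take (j + 1)).map (c a)).sum + ((s.take j).map (c v)).sum ≤
      c a v + ((s.take j).map (c a)).sum + ((s.take (j + 1)).map (c v)).sum
  | [], _ => by simpa using hc0 a v
  | x :: s, 0 => by simpa using htri a v x
  | x :: s, j + 1 => by
    simp only [List.take_succ_cons, List.map_cons, List.sum_cons]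
    linarith [sum_map_take_succ_add_le hc0 htri a v s j]

-- The extra sum is the part of the hops out of `v` that the prefix `p` has not yet spent.
lemma walkHopCost_append_add_le (hc0 : ∀ x y, 0 ≤ c x y)
    (htri : ∀ x y z, c x z ≤ c x y + c y z) (v : V) (s : List V) :
    ∀ p : List V, walkHopCost c k (p ++ s) + ((s.take (k - p.length)).map (c v)).sum ≤
      walkHopCost c k (p ++ v :: s)
  | [] => by simp [walkHopCost_cons]
  | a :: p => by
    have ih := walkHopCost_append_add_le hc0 htri v s p
    simp only [List.cons_append, walkHopCost_cons, List.take_append, List.map_append,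
      List.sum_append, List.length_cons]
    have hj : k - (p.length + 1) = k - p.length - 1 := by omega
    rw [hj]
    generalize k - p.length = m at ih ⊢
    rcases m with _ | j
    · simp only [List.take_zero, List.map_nil, List.sum_nil, add_zero, Nat.zero_sub] at ih ⊢
      linarith
    · rw [List.take_succ_cons, List.map_cons, List.sum_cons, Nat.add_sub_cancel]
      linarith [sum_map_take_succ_add_le c hc0 htri a v s j]

lemma sum_map_nonneg (hc0 : ∀ x y, 0 ≤ c x y) (v : V) (l : List V) : 0 ≤ (l.map (c v)).sum :=
  List.sum_nonneg (List.forall_mem_map.mpr fun y _ => hc0 v y)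

lemma walkHopCost_eraseIdx_le (hc0 : ∀ x y, 0 ≤ c x y)
    (htri : ∀ x y z, c x z ≤ c x y + c y z) (W : List V) (i : ℕ) (hi : i < W.length) :
    walkHopCost c k (W.eraseIdx i) ≤ walkHopCost c k W := by
  have key := walkHopCost_append_add_le c k hc0 htri W[i] (W.drop (i + 1)) (W.take i)
  rw [← List.drop_eq_getElem_cons hi, List.take_append_drop] at key
  have slack_nonneg := sum_map_nonneg c hc0 W[i] ((W.drop (i + 1)).take (k - (W.take i).length))
  rw [List.eraseIdx_eq_take_drop_succ]
  linarith

lemma cycHopCost_rotate (l : List V) (n : ℕ) :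
    cycHopCost c k (l.rotate n) = cycHopCost c k l := by
  refine Finset.sum_congr rfl fun Δ _ => ?_
  rw [List.rotate_rotate, add_comm, ← List.rotate_rotate,
    ← List.zipWith_rotate_distrib _ _ _ _ (by simp)]
  exact (List.rotate_perm _ _).sum_eq

lemma cycHopCost_add_walkHopCost_take (l : List V) (hk : k ≤ l.length) :
    cycHopCost c k l + walkHopCost c k (l.take k) = walkHopCost c k (l ++ l.take k) := by
  rw [cycHopCost, walkHopCost, walkHopCost, ← Finset.sum_add_distrib]
  refine Finset.sum_congr rfl fun Δ hΔ => ?_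
  have hΔk : Δ ≤ k := (Finset.mem_Icc.mp hΔ).2
  have hsplit : (l ++ l.take k).drop Δ = l.rotate Δ ++ (l.take k).drop Δ := by
    conv_lhs => rw [← List.take_append_drop Δ (l.take k)]
    rw [List.drop_append_of_le_length (by omega), List.take_take, min_eq_left hΔk,
      List.rotate_eq_drop_append_take (by omega), List.append_assoc]
  rw [hsplit, List.zipWith_append (by simp), List.sum_append]

lemma cycHopCost_le_append_singleton (hc0 : ∀ x y, 0 ≤ c x y)
    (htri : ∀ x y z, c x z ≤ c x y + c y z) (u : List V) (v : V) (hk : k ≤ u.length) :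
    cycHopCost c k u ≤ cycHopCost c k (u ++ [v]) := by
  have hu := cycHopCost_add_walkHopCost_take c k u hk
  have huv := cycHopCost_add_walkHopCost_take c k (u ++ [v]) (by simp; omega)
  rw [List.take_append_of_le_length hk, List.append_assoc, List.singleton_append] at huv
  have key := walkHopCost_append_add_le c k hc0 htri v (u.take k) u
  have slack_nonneg := sum_map_nonneg c hc0 v ((u.take k).take (k - u.length))
  linarith

lemma cycHopCost_eraseIdx_le (hc0 : ∀ x y, 0 ≤ c x y)
    (htri : ∀ x y z, c x z ≤ c x y + c y z) (W : List V) (i : ℕ) (hi : i < W.length)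
    (hk : k < W.length) :
    cycHopCost c k (W.eraseIdx i) ≤ cycHopCost c k W := by
  set u := W.drop (i + 1) ++ W.take i with hu
  have hlen : (W.take i).length = i := List.length_take_of_le hi.le
  have herase : (W.eraseIdx i).rotate i = u := by
    have := List.rotate_append_length_eq (W.take i) (W.drop (i + 1))
    rwa [hlen, ← List.eraseIdx_eq_take_drop_succ] at this
  have hrot : W.rotate (i + 1) = u ++ [W[i]] := by
    rw [List.rotate_eq_drop_append_take hi, List.take_succ_eq_append_getElem hi, hu,
      List.append_assoc]
  rw [← cycHopCost_rotate c k (W.eraseIdx i) i, ← cycHopCost_rotate c k W (i + 1), herase, hrot]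
  exact cycHopCost_le_append_singleton c k hc0 htri u W[i] (by simp [u]; omega)

end

theorem statement6_general {V : Type*} (c : V → V → ℝ) (k : ℕ)
    (hc0 : ∀ x y, 0 ≤ c x y)
    (htri : ∀ x y z, c x z ≤ c x y + c y z) :
    (∀ (W : List V) (i : ℕ), i < W.length → k ≤ W.length - 2 →
      cycHopCost c k (W.eraseIdx i) ≤ cycHopCost c k W) ∧
    (∀ (W : List V) (i : ℕ), i < W.length →
      walkHopCost c k (W.eraseIdx i) ≤ walkHopCost c k W) :=
  ⟨fun W i hi hk => cycHopCost_eraseIdx_le c k hc0 htri W i hi (by omega),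
    walkHopCost_eraseIdx_le c k hc0 htri⟩

/-- omitting a vertex visit does not increase the `k`-hop cost:
(i) for closed walks with `k ≤ t − 2`, and (ii) for non-closed walks. -/
theorem statement6 {V : Type*} (c : V → V → ℝ) (k : ℕ) (hk : 1 ≤ k)
    (hc0 : ∀ x y, 0 ≤ c x y)
    (hcrefl : ∀ v, c v v = 0)
    (htri : ∀ x y z, c x z ≤ c x y + c y z) :
    (∀ (W : List V) (i : ℕ), i < W.length → k ≤ W.length - 2 →
      cycHopCost c k (W.eraseIdx i) ≤ cycHopCost c k W) ∧
    (∀ (W : List V) (i : ℕ), i < W.length →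
      walkHopCost c k (W.eraseIdx i) ≤ walkHopCost c k W) :=
  statement6_general c k hc0 htri

end
end

section
/- Let (V,c,p) be an instance of Asymmetric A Priori TSP with p(V) := Σ_{v∈V} p(v) > 0, and let S be a tour on V. Then there exists a vertex d ∈ V such that, defining p' : V → [0,1] by p'(d) = 1 and p'(v) = p(v) for v ≠ d, the following two inequalities hold: (i) E_{A∼p}[c(T[A])] ≤ E_{A∼p'}[c(T[A])] for every tour T on V, and (ii) E_{A∼p'}[c(S[A])] ≤ 2·(1 + 1/p(V)) · E_{A∼p}[c(S[A])]. -/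
/-!
Part (i) holds for every `d`: by the triangle inequality short-cutting never increases the cost
of a tour, so `c(T[A]) ≤ c(T[A ∪ {d}])`, and raising `p d` to `1` only moves probability mass
from outcomes `A` to `A ∪ {d}`.

For (ii), write `p^d` for `p` with `p d` raised to `1`. Then
`∑_d p(d) E_{p^d}[c(S[A])] = E_p[|A| c(S[A])]`. Split `c(S[A])` over the edges `(u, v)` of
`S[A]`: such an edge is present iff `u, v ∈ A` and no vertex strictly between `u` and `v` on `S`
is in `A`. This event is independent of the remaining vertices, and on it `A` contains at most
`u` and `v` among `u`, `v` and the vertices between them, so the expected number of active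
vertices conditional on it is at most `2 + p(V)`. Hence `∑_d p(d) E_{p^d}[c(S[A])]` is at most
`(2 + p(V)) E_p[c(S[A])]`, and some `d` has `E_{p^d}[c(S[A])] ≤ (1 + 2/p(V)) E_p[c(S[A])]`.
-/

noncomputable section

/-- Short-cutting a tour to the set `A` of active vertices. -/
def shortcut {V : Type*} [DecidableEq V] (l : List V) (A : Finset V) : List V :=
  l.filter (fun v => v ∈ A)

/-- The expectation of `f` over the random set of active vertices, where each vertex `v`
is active independently with probability `p v`. -/
def apExpect {V : Type*} [Fintype V] [DecidableEq V] (p : V → ℝ) (f : Finset V → ℝ) : ℝ :=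
  ∑ A : Finset V, (∏ v ∈ A, p v) * (∏ v ∈ Aᶜ, (1 - p v)) * f A

section PathCost

variable {V : Type*} (c : V → V → ℝ)

def pathCost : V → List V → ℝ
  | _, [] => 0
  | a, b :: t => c a b + pathCost b t

lemma cycCost_nil : cycCost c ([] : List V) = 0 := rfl

lemma cycCost_cons (a : V) (t : List V) : cycCost c (a :: t) = pathCost c a (t ++ [a]) := by
  suffices ∀ x, (List.zipWith c (x :: t) (t ++ [a])).sum = pathCost c x (t ++ [a]) by
    rw [cycCost, List.rotate_cons_succ, List.rotate_zero, this]
  induction t with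
  | nil => simp [pathCost]
  | cons b t ih => intro x; simp [pathCost, ih]

variable {c}

lemma pathCost_le_add (hc0 : ∀ x y, 0 ≤ c x y) (htri : ∀ x y z, c x z ≤ c x y + c y z)
    (a x : V) (l : List V) : pathCost c a l ≤ c a x + pathCost c x l := by
  cases l with
  | nil => simpa [pathCost] using hc0 a x
  | cons b t => simp only [pathCost]; linarith [htri a x b]

lemma pathCost_append_singleton_le (htri : ∀ x y z, c x z ≤ c x y + c y z) (a b : V)
    (t : List V) (x : V) : pathCost c x (t ++ [b]) ≤ pathCost c x (t ++ [a]) + c a b := by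
  induction t generalizing x with
  | nil => simpa [pathCost] using htri x a b
  | cons y t ih => simpa [pathCost, add_assoc] using ih y

lemma pathCost_append_singleton_le_of_sublist (hc0 : ∀ x y, 0 ≤ c x y)
    (htri : ∀ x y z, c x z ≤ c x y + c y z) {l₁ l₂ : List V} (h : l₁.Sublist l₂) (a b : V) :
    pathCost c a (l₁ ++ [b]) ≤ pathCost c a (l₂ ++ [b]) := by
  induction h generalizing a with
  | slnil => exact le_rfl
  | cons x _ ih => exact (ih a).trans (pathCost_le_add hc0 htri a x _)
  | cons_cons x _ ih => simpa [pathCost] using ih x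

lemma cycCost_le_cycCost_cons (hc0 : ∀ x y, 0 ≤ c x y)
    (htri : ∀ x y z, c x z ≤ c x y + c y z) (a : V) (t : List V) :
    cycCost c t ≤ cycCost c (a :: t) := by
  cases t with
  | nil => simpa [cycCost_nil, cycCost_cons, pathCost] using hc0 a a
  | cons b t =>
    simp only [cycCost_cons, List.cons_append, pathCost]
    linarith [pathCost_append_singleton_le htri a b t b, hc0 a b]

theorem cycCost_le_of_sublist (hc0 : ∀ x y, 0 ≤ c x y)
    (htri : ∀ x y z, c x z ≤ c x y + c y z) {l₁ l₂ : List V} (h : l₁.Sublist l₂) :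
    cycCost c l₁ ≤ cycCost c l₂ := by
  induction h with
  | slnil => exact le_rfl
  | cons a _ ih => exact ih.trans (cycCost_le_cycCost_cons hc0 htri a _)
  | cons_cons a h => simpa only [cycCost_cons] using
      pathCost_append_singleton_le_of_sublist hc0 htri h a a

end PathCost

namespace List

variable {α : Type*}

theorem filter_rotate (P : α → Bool) (S : List α) {t : ℕ} (ht : t ≤ S.length) :
    (S.rotate t).filter P = (S.filter P).rotate ((S.take t).countP P) := by
  have hsplit : S.filter P = (S.take t).filter P ++ (S.drop t).filter P := by
    rw [← filter_append, take_append_drop]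
  rw [rotate_eq_drop_append_take ht, filter_append, hsplit,
    countP_eq_length_filter, rotate_eq_drop_append_take (by simp), drop_left,
    take_left]

theorem countP_take_idxOf_succ [DecidableEq α] (P : α → Bool) {S : List α} {u : α} (hu : u ∈ S)
    (hP : P u) :
    (S.take (S.idxOf u + 1)).countP P = (S.filter P).idxOf u + 1 := by
  induction S with
  | nil => simp at hu
  | cons x S ih =>
    by_cases hxu : x = u
    · subst hxu
      simp [hP]
    · have hu' : u ∈ S := (mem_cons.mp hu).resolve_left (Ne.symm hxu)
      by_cases hPx : P x <;>
        simp [idxOf_cons_ne _ hxu, hPx, ih hu']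

theorem headD_filter_eq_iff [DecidableEq α] (A : Finset α) (d : α) {R : List α} {v : α}
    (hv : v ∈ R) (hvA : v ∈ A) :
    (R.filter (· ∈ A)).headD d = v ↔ _root_.Disjoint (R.takeWhile (· ≠ v)).toFinset A := by
  induction R with
  | nil => simp at hv
  | cons x R ih =>
    by_cases hxv : x = v
    · subst hxv
      simp [hvA]
    · have hv' : v ∈ R := (mem_cons.mp hv).resolve_left (Ne.symm hxv)
      by_cases hxA : x ∈ A
      · simp [hxA, hxv]
      · rw [filter_cons_of_neg (by simpa), takeWhile_cons_of_pos (by simpa),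
          toFinset_cons, Finset.disjoint_insert_left, ih hv']
        simp [hxA]

end List

section Successor

variable {V : Type*} [DecidableEq V]

open Finset

/-- `S` read cyclically from the position just after `u`; it ends with `u` when `u ∈ S`. -/
def cyclicAfter (S : List V) (u : V) : List V := S.rotate (S.idxOf u + 1)

def nextIn (S : List V) (A : Finset V) (u : V) : V := ((cyclicAfter S u).filter (· ∈ A)).headD u

def between (S : List V) (u v : V) : Finset V := ((cyclicAfter S u).takeWhile (· ≠ v)).toFinset

lemma nextIn_mem {S : List V} {A : Finset V} {u : V} (hu : u ∈ S) (huA : u ∈ A) :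
    nextIn S A u ∈ A ∧ nextIn S A u ∈ S := by
  have hF : u ∈ (cyclicAfter S u).filter (· ∈ A) :=
    List.mem_filter.mpr ⟨List.mem_rotate.mpr hu, by simpa using huA⟩
  have hnext : nextIn S A u ∈ (cyclicAfter S u).filter (· ∈ A) := by
    rw [nextIn]
    cases h : (cyclicAfter S u).filter (· ∈ A) with
    | nil => simp [h] at hF
    | cons a t => simp
  simpa [cyclicAfter, and_comm] using hnext

lemma eq_nextIn_iff {S : List V} {A : Finset V} {u v : V} (hu : u ∈ S) (huA : u ∈ A)
    (hv : v ∈ S) : v = nextIn S A u ↔ v ∈ A ∧ Disjoint (between S u v) A := by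
  constructor
  · rintro rfl
    obtain ⟨hA, hS⟩ := nextIn_mem hu huA
    exact ⟨hA, (List.headD_filter_eq_iff A u (List.mem_rotate.mpr hS) hA).mp rfl⟩
  · rintro ⟨hvA, hdisj⟩
    exact ((List.headD_filter_eq_iff A u (List.mem_rotate.mpr hv) hvA).mpr hdisj).symm

lemma nextIn_getElem {S : List V} (hS : S.Nodup) (A : Finset V) (i : ℕ)
    (hi : i < (S.filter (· ∈ A)).length) :
    nextIn S A (S.filter (· ∈ A))[i] =
      (S.filter (· ∈ A))[(i + 1) % (S.filter (· ∈ A)).length]'(Nat.mod_lt _ (by omega)) := by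
  have hmem : (S.filter (· ∈ A))[i] ∈ S.filter (· ∈ A) := List.getElem_mem hi
  have hS' := List.mem_of_mem_filter hmem
  have hidx : S.idxOf (S.filter (· ∈ A))[i] + 1 ≤ S.length := List.idxOf_lt_length_iff.mpr hS'
  rw [nextIn, cyclicAfter, List.filter_rotate _ S hidx,
    List.countP_take_idxOf_succ _ hS' (List.mem_filter.mp hmem).2, (hS.filter _).idxOf_getElem,
    List.headD_eq_getD, List.getD_eq_getElem _ _ (by simp only [List.length_rotate]; omega),
    List.getElem_rotate]
  simp

lemma cycCost_filter_eq_sum_nextIn (c : V → V → ℝ) {S : List V} (hS : S.Nodup) {A : Finset V}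
    (hA : ∀ a ∈ A, a ∈ S) : cycCost c (S.filter (· ∈ A)) = ∑ u ∈ A, c u (nextIn S A u) := by
  have hF : (S.filter (· ∈ A)).toFinset = A := by
    ext a
    simpa using fun ha => hA a ha
  have hsum : ∑ u ∈ A, c u (nextIn S A u) =
      ((S.filter (· ∈ A)).map fun u => c u (nextIn S A u)).sum := by
    rw [← List.sum_toFinset _ (hS.filter _), hF]
  rw [hsum, cycCost]
  congr 1
  refine List.ext_getElem (by simp) fun i h₁ h₂ => ?_
  simp [nextIn_getElem hS A i (by simpa using h₂)]

theorem cycCost_shortcut_eq_sum_edges [Fintype V] (c : V → V → ℝ) {S : List V}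
    (hS : IsTour Finset.univ S) (A : Finset V) :
    cycCost c (shortcut S A) =
      ∑ u, ∑ v, if u ∈ A ∧ v ∈ A ∧ Disjoint (between S u v) A then c u v else 0 := by
  have hmem : ∀ v, v ∈ S := fun v => by simp [← List.mem_toFinset, hS.2]
  have hrow : ∀ u, (∑ v, if u ∈ A ∧ v ∈ A ∧ Disjoint (between S u v) A then c u v else 0) =
      if u ∈ A then c u (nextIn S A u) else 0 := by
    intro u
    split_ifs with huA
    · rw [← Fintype.sum_ite_eq' (nextIn S A u) (c u)]
      refine Finset.sum_congr rfl fun v _ => if_congr ?_ rfl rfl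
      rw [eq_nextIn_iff (hmem u) huA (hmem v), and_iff_right huA]
    · simp [huA]
  rw [shortcut, cycCost_filter_eq_sum_nextIn c hS.1 fun a _ => hmem a, Finset.sum_congr rfl
    fun u _ => hrow u, Finset.sum_ite_mem, univ_inter]

lemma card_inter_insert_insert_between_le_two {S : List V} {A : Finset V} {u v : V}
    (hdisj : Disjoint (between S u v) A) : #(A ∩ insert u (insert v (between S u v))) ≤ 2 := by
  calc #(A ∩ insert u (insert v (between S u v))) ≤ #({u, v} : Finset V) := by
        refine card_le_card fun x hx => ?_
        obtain ⟨hxA, hx⟩ := mem_inter.mp hx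
        simp only [mem_insert, mem_singleton] at hx ⊢
        rcases hx with rfl | rfl | hx
        · exact Or.inl rfl
        · exact Or.inr rfl
        · exact absurd hxA (disjoint_left.mp hdisj hx)
    _ ≤ 2 := card_le_two

end Successor

section Expectation

variable {V : Type*} [Fintype V] [DecidableEq V] {p : V → ℝ}

open Finset Function

lemma weight_nonneg (hp0 : ∀ v, 0 ≤ p v) (hp1 : ∀ v, p v ≤ 1) (A : Finset V) :
    0 ≤ (∏ v ∈ A, p v) * ∏ v ∈ Aᶜ, (1 - p v) :=
  mul_nonneg (prod_nonneg fun v _ => hp0 v) (prod_nonneg fun v _ => by linarith [hp1 v])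

lemma apExpect_mono (hp0 : ∀ v, 0 ≤ p v) (hp1 : ∀ v, p v ≤ 1) {f g : Finset V → ℝ}
    (h : ∀ A, f A ≤ g A) : apExpect p f ≤ apExpect p g :=
  sum_le_sum fun A _ => mul_le_mul_of_nonneg_left (h A) (weight_nonneg hp0 hp1 A)

lemma apExpect_nonneg (hp0 : ∀ v, 0 ≤ p v) (hp1 : ∀ v, p v ≤ 1) {f : Finset V → ℝ}
    (hf : ∀ A, 0 ≤ f A) : 0 ≤ apExpect p f := by
  simpa [apExpect] using apExpect_mono hp0 hp1 hf

lemma apExpect_add (p : V → ℝ) (f g : Finset V → ℝ) :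
    (apExpect p fun A => f A + g A) = apExpect p f + apExpect p g := by
  simp only [apExpect, mul_add, sum_add_distrib]

lemma apExpect_const_mul (p : V → ℝ) (r : ℝ) (f : Finset V → ℝ) :
    (apExpect p fun A => r * f A) = r * apExpect p f := by
  simp only [apExpect, mul_sum]
  exact sum_congr rfl fun A _ => by ring

lemma apExpect_sum {ι : Type*} (p : V → ℝ) (s : Finset ι) (f : ι → Finset V → ℝ) :
    (apExpect p fun A => ∑ i ∈ s, f i A) = ∑ i ∈ s, apExpect p (f i) := by
  simp only [apExpect, mul_sum]
  exact sum_comm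

def restWeight (p : V → ℝ) (d : V) (B : Finset V) : ℝ :=
  ∏ v ∈ univ.erase d, if v ∈ B then p v else 1 - p v

lemma restWeight_nonneg (hp0 : ∀ v, 0 ≤ p v) (hp1 : ∀ v, p v ≤ 1) (d : V) (B : Finset V) :
    0 ≤ restWeight p d B :=
  prod_nonneg fun v _ => by split_ifs <;> linarith [hp0 v, hp1 v]

lemma weight_eq_mul_restWeight (p : V → ℝ) (d : V) (A : Finset V) :
    (∏ v ∈ A, p v) * ∏ v ∈ Aᶜ, (1 - p v) =
      (if d ∈ A then p d else 1 - p d) * restWeight p d (A.erase d) := by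
  have hite : (∏ v ∈ A, p v) * ∏ v ∈ Aᶜ, (1 - p v) = ∏ v, if v ∈ A then p v else 1 - p v := by
    rw [prod_ite, filter_mem_eq_inter, univ_inter, filter_notMem_eq_sdiff, compl_eq_univ_sdiff]
  rw [hite, ← mul_prod_erase univ _ (mem_univ d), restWeight]
  congr 1
  exact prod_congr rfl fun v hv => by simp [ne_of_mem_erase hv]

theorem apExpect_eq_sum_powerset_erase (p : V → ℝ) (d : V) (f : Finset V → ℝ) :
    apExpect p f = ∑ B ∈ (univ.erase d).powerset,
      restWeight p d B * ((1 - p d) * f B + p d * f (insert d B)) := by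
  have hsplit : (univ : Finset (Finset V)) = (insert d (univ.erase d)).powerset := by
    rw [insert_erase (mem_univ d), powerset_univ]
  rw [apExpect, hsplit, sum_powerset_insert (notMem_erase d _), ← sum_add_distrib]
  refine sum_congr rfl fun B hB => ?_
  have hd : d ∉ B := fun h => notMem_erase d _ (mem_powerset.mp hB h)
  rw [weight_eq_mul_restWeight p d, weight_eq_mul_restWeight p d, if_neg hd,
    if_pos (mem_insert_self d B), erase_insert hd, erase_eq_of_notMem hd]
  ring

lemma apExpect_update_one (p : V → ℝ) (d : V) (f : Finset V → ℝ) :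
    apExpect (update p d 1) f =
      ∑ B ∈ (univ.erase d).powerset, restWeight p d B * f (insert d B) := by
  have hrest : restWeight (update p d 1) d = restWeight p d := by
    ext B
    exact prod_congr rfl fun v hv => by rw [update_of_ne (ne_of_mem_erase hv)]
  rw [apExpect_eq_sum_powerset_erase, hrest, update_self]
  simp

theorem apExpect_le_apExpect_update_one (hp0 : ∀ v, 0 ≤ p v) (hp1 : ∀ v, p v ≤ 1) (d : V)
    {f : Finset V → ℝ} (hf : ∀ A, d ∉ A → f A ≤ f (insert d A)) :
    apExpect p f ≤ apExpect (update p d 1) f := by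
  rw [apExpect_eq_sum_powerset_erase p d, apExpect_update_one]
  refine sum_le_sum fun B hB => mul_le_mul_of_nonneg_left ?_ (restWeight_nonneg hp0 hp1 d B)
  have hd : d ∉ B := fun h => notMem_erase d _ (mem_powerset.mp hB h)
  nlinarith [hf B hd, hp1 d]

theorem mul_apExpect_update_one (p : V → ℝ) (d : V) (f : Finset V → ℝ) :
    p d * apExpect (update p d 1) f = apExpect p fun A => if d ∈ A then f A else 0 := by
  rw [apExpect_update_one, apExpect_eq_sum_powerset_erase p d, mul_sum]
  refine sum_congr rfl fun B hB => ?_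
  have hd : d ∉ B := fun h => notMem_erase d _ (mem_powerset.mp hB h)
  rw [if_neg hd, if_pos (mem_insert_self d B)]
  ring

theorem apExpect_ite_mem (p : V → ℝ) {x : V} {g : Finset V → ℝ}
    (hg : ∀ A, x ∉ A → g (insert x A) = g A) :
    (apExpect p fun A => if x ∈ A then g A else 0) = p x * apExpect p g := by
  rw [← mul_apExpect_update_one, apExpect_update_one, apExpect_eq_sum_powerset_erase p x]
  refine congrArg _ (sum_congr rfl fun B hB => ?_)
  rw [hg B fun h => notMem_erase x _ (mem_powerset.mp hB h)]
  ring

theorem apExpect_card_mul_le (hp0 : ∀ v, 0 ≤ p v) (hp1 : ∀ v, p v ≤ 1) (K : Finset V) (k : ℕ)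
    {g : Finset V → ℝ} (hg0 : ∀ A, 0 ≤ g A) (hgK : ∀ x ∉ K, ∀ A, x ∉ A → g (insert x A) = g A)
    (hcard : ∀ A, g A ≠ 0 → #(A ∩ K) ≤ k) :
    (apExpect p fun A => #A * g A) ≤ (k + ∑ v, p v) * apExpect p g := by
  have hpt : ∀ A : Finset V, #A * g A ≤ k * g A + ∑ x ∈ Kᶜ, if x ∈ A then g A else 0 := by
    intro A
    have hAK : Kᶜ ∩ A = A \ K := by
      ext
      simp [and_comm]
    rw [sum_ite_mem, hAK, sum_const, nsmul_eq_mul, ← card_inter_add_card_sdiff A K, Nat.cast_add,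
      add_mul]
    by_cases hA : g A = 0
    · simp [hA]
    · gcongr
      · exact hg0 A
      · exact_mod_cast hcard A hA
  calc (apExpect p fun A => #A * g A)
      ≤ apExpect p fun A => k * g A + ∑ x ∈ Kᶜ, if x ∈ A then g A else 0 :=
        apExpect_mono hp0 hp1 hpt
    _ = k * apExpect p g + ∑ x ∈ Kᶜ, p x * apExpect p g := by
        rw [apExpect_add, apExpect_const_mul, apExpect_sum]
        exact congrArg _ (sum_congr rfl fun x hx => apExpect_ite_mem p (hgK x (mem_compl.mp hx)))
    _ ≤ k * apExpect p g + ∑ x, p x * apExpect p g := by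
        refine add_le_add le_rfl (sum_le_sum_of_subset_of_nonneg (subset_univ _) fun x _ _ => ?_)
        exact mul_nonneg (hp0 x) (apExpect_nonneg hp0 hp1 hg0)
    _ = (k + ∑ v, p v) * apExpect p g := by rw [← sum_mul]; ring

end Expectation

theorem Finset.exists_le_of_sum_mul_le {ι : Type*} {s : Finset ι} {w X : ι → ℝ} {B : ℝ}
    (hw : ∀ i ∈ s, 0 ≤ w i) (hpos : 0 < ∑ i ∈ s, w i)
    (h : ∑ i ∈ s, w i * X i ≤ (∑ i ∈ s, w i) * B) : ∃ i ∈ s, X i ≤ B := by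
  by_contra! hX
  obtain ⟨i, hi, hwi⟩ := exists_lt_of_sum_lt (f := fun _ => 0) (g := w) (by simpa using hpos)
  have hlt : (∑ i ∈ s, w i) * B < ∑ i ∈ s, w i * X i := by
    rw [sum_mul]
    exact sum_lt_sum (fun j hj => mul_le_mul_of_nonneg_left (hX j hj).le (hw j hj))
      ⟨i, hi, mul_lt_mul_of_pos_left (hX i hi) hwi⟩
  linarith

section TourEstimate

variable {V : Type*} [Fintype V] [DecidableEq V] {c : V → V → ℝ} {p : V → ℝ}

open Finset Function

theorem sum_mul_apExpect_update_one_le (hc0 : ∀ x y, 0 ≤ c x y) (hp0 : ∀ v, 0 ≤ p v)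
    (hp1 : ∀ v, p v ≤ 1) {S : List V} (hS : IsTour univ S) :
    ∑ d, p d * apExpect (update p d 1) (fun A => cycCost c (shortcut S A)) ≤
      (2 + ∑ v, p v) * apExpect p (fun A => cycCost c (shortcut S A)) := by
  have hcard : ∀ A : Finset V, (∑ d, if d ∈ A then cycCost c (shortcut S A) else 0) =
      #A * cycCost c (shortcut S A) := fun A => by
    rw [sum_ite_mem, univ_inter, sum_const, nsmul_eq_mul]
  simp only [mul_apExpect_update_one]
  rw [← apExpect_sum]
  simp only [hcard]
  simp only [cycCost_shortcut_eq_sum_edges c hS, mul_sum, apExpect_sum]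
  refine sum_le_sum fun u _ => sum_le_sum fun v _ =>
    apExpect_card_mul_le hp0 hp1 (insert u (insert v (between S u v))) 2 ?_ ?_ ?_
  · intro A
    split_ifs
    exacts [hc0 u v, le_rfl]
  · intro x hx A hxA
    simp only [mem_insert, not_or] at hx
    simp [disjoint_insert_right, Ne.symm hx.1, Ne.symm hx.2.1, hx.2.2]
  · intro A hA
    split_ifs at hA with hE
    · exact card_inter_insert_insert_between_le_two hE.2.2
    · exact absurd rfl hA

end TourEstimate

theorem statement7_general {V : Type*} [Fintype V] [DecidableEq V]
    (c : V → V → ℝ) (p : V → ℝ)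
    (hc0 : ∀ x y, 0 ≤ c x y)
    (htri : ∀ x y z, c x z ≤ c x y + c y z)
    (hp0 : ∀ v, 0 ≤ p v) (hp1 : ∀ v, p v ≤ 1)
    (hpV : 0 < ∑ v, p v)
    (S : List V) (hS : IsTour Finset.univ S) :
    ∃ d : V,
      (∀ T : List V, IsTour Finset.univ T →
        apExpect p (fun A => cycCost c (shortcut T A)) ≤
          apExpect (Function.update p d 1) (fun A => cycCost c (shortcut T A))) ∧
      apExpect (Function.update p d 1) (fun A => cycCost c (shortcut S A)) ≤
        2 * (1 + 1 / (∑ v, p v)) * apExpect p (fun A => cycCost c (shortcut S A)) := by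
  set P := ∑ v, p v
  set E := apExpect p fun A => cycCost c (shortcut S A)
  have hE : 0 ≤ E :=
    apExpect_nonneg hp0 hp1 fun A => cycCost_le_of_sublist hc0 htri (List.nil_sublist _)
  have hbound : ∑ d, p d * apExpect (Function.update p d 1) (fun A => cycCost c (shortcut S A)) ≤
      P * (2 * (1 + 1 / P) * E) := by
    have hPE : P * (2 * (1 + 1 / P) * E) = (2 + P) * E + P * E := by
      field_simp
      ring
    rw [hPE]
    linarith [sum_mul_apExpect_update_one_le hc0 hp0 hp1 hS, mul_nonneg hpV.le hE]
  obtain ⟨d, -, hd⟩ := Finset.exists_le_of_sum_mul_le (fun v _ => hp0 v) hpV hbound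
  exact ⟨d, fun T _ => apExpect_le_apExpect_update_one hp0 hp1 d fun A _ =>
    cycCost_le_of_sublist hc0 htri (List.monotone_filter_right T fun v hv => by simp_all), hd⟩

/-- there is a vertex `d` such that raising its activation probability to `1`
(i) never decreases the expected short-cut cost of any tour, and (ii) increases the expected
short-cut cost of the given tour `S` by a factor of at most `2·(1 + 1/p(V))`. -/
theorem statement7 {V : Type*} [Fintype V] [DecidableEq V]
    (c : V → V → ℝ) (p : V → ℝ)
    (hc0 : ∀ x y, 0 ≤ c x y)
    (hcrefl : ∀ v, c v v = 0)
    (htri : ∀ x y z, c x z ≤ c x y + c y z)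
    (hp0 : ∀ v, 0 ≤ p v) (hp1 : ∀ v, p v ≤ 1)
    (hpV : 0 < ∑ v, p v)
    (S : List V) (hS : IsTour Finset.univ S) :
    ∃ d : V,
      (∀ T : List V, IsTour Finset.univ T →
        apExpect p (fun A => cycCost c (shortcut T A)) ≤
          apExpect (Function.update p d 1) (fun A => cycCost c (shortcut T A))) ∧
      apExpect (Function.update p d 1) (fun A => cycCost c (shortcut S A)) ≤
        2 * (1 + 1 / (∑ v, p v)) * apExpect p (fun A => cycCost c (shortcut S A)) :=
  statement7_general c p hc0 htri hp0 hp1 hpV S hS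

end
end

section
/- Let (V,c,p) be an instance of Asymmetric A Priori TSP with a depot d ∈ V (i.e., p(d) = 1). Then every tour T on V satisfies E_{A∼p}[c(T[A])] ≤ 6 · p(V) · E_{A∼p}[TSP(A,c)], where p(V) := Σ_{v∈V} p(v). -/
noncomputable section

set_option linter.unusedSectionVars false

namespace AP

variable {V : Type*}

lemma sum_zipWith_le (f g : V → V → ℝ) (h : ∀ x y, f x y ≤ g x y) :
    ∀ (l l' : List V), (List.zipWith f l l').sum ≤ (List.zipWith g l l').sum
  | [], _ => by simp
  | _ :: _, [] => by simp
  | a :: l, b :: l' => by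
    simp only [List.zipWith_cons_cons, List.sum_cons]
    exact add_le_add (h a b) (sum_zipWith_le f g h l l')

lemma sum_zipWith_nonneg (f : V → V → ℝ) (h : ∀ x y, 0 ≤ f x y) :
    ∀ (l l' : List V), 0 ≤ (List.zipWith f l l').sum
  | [], _ => by simp
  | _ :: _, [] => by simp
  | a :: l, b :: l' => by
    simp only [List.zipWith_cons_cons, List.sum_cons]
    exact add_nonneg (h a b) (sum_zipWith_nonneg f h l l')

lemma cycCost_nonneg (c : V → V → ℝ) (h : ∀ x y, 0 ≤ c x y) (l : List V) :
    0 ≤ cycCost c l := sum_zipWith_nonneg c h _ _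

lemma sum_zipWith_fst (f : V → ℝ) :
    ∀ (l l' : List V), l.length = l'.length →
      (List.zipWith (fun u (_ : V) => f u) l l').sum = (l.map f).sum
  | [], [], _ => rfl
  | [], _ :: _, h => by simp at h
  | _ :: _, [], h => by simp at h
  | a :: l, b :: l', h => by
    simp only [List.zipWith_cons_cons, List.sum_cons, List.map_cons]
    rw [sum_zipWith_fst f l l' (by simpa using h)]

lemma sum_zipWith_snd (f : V → ℝ) :
    ∀ (l l' : List V), l.length = l'.length →
      (List.zipWith (fun (_ : V) v => f v) l l').sum = (l'.map f).sum
  | [], [], _ => rfl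
  | [], _ :: _, h => by simp at h
  | _ :: _, [], h => by simp at h
  | a :: l, b :: l', h => by
    simp only [List.zipWith_cons_cons, List.sum_cons, List.map_cons]
    rw [sum_zipWith_snd f l l' (by simpa using h)]

lemma sum_zipWith_add (f g : V → V → ℝ) :
    ∀ (l l' : List V),
      (List.zipWith (fun u v => f u v + g u v) l l').sum =
        (List.zipWith f l l').sum + (List.zipWith g l l').sum
  | [], _ => by simp
  | _ :: _, [] => by simp
  | a :: l, b :: l' => by
    simp only [List.zipWith_cons_cons, List.sum_cons]
    rw [sum_zipWith_add f g l l']; ring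

lemma zipWith_rotate (f : V → V → ℝ) (l l' : List V) (n : ℕ) (h : l.length = l'.length) :
    List.zipWith f (l.rotate n) (l'.rotate n) = (List.zipWith f l l').rotate n := by
  rcases l with _ | ⟨a, l⟩
  · cases l' with
    | nil => simp
    | cons b l' => simp at h
  · have hlen : 0 < (a :: l).length := by simp
    rw [← List.rotate_mod (a :: l) n, ← List.rotate_mod l' n,
      ← List.rotate_mod (List.zipWith f (a :: l) l') n]
    rw [h] at hlen ⊢
    have hm : n % l'.length ≤ l'.length := le_of_lt (Nat.mod_lt _ hlen)
    have hz : (List.zipWith f (a :: l) l').length = l'.length := by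
      rw [List.length_zipWith, h, min_self]
    rw [List.rotate_eq_drop_append_take hm, List.rotate_eq_drop_append_take (h ▸ hm),
      List.rotate_eq_drop_append_take (hz ▸ hm), hz]
    rw [List.zipWith_append (by rw [List.length_drop, List.length_drop, h])]
    rw [List.drop_zipWith, List.take_zipWith]

lemma cycCost_rotate (c : V → V → ℝ) (l : List V) (n : ℕ) :
    cycCost c (l.rotate n) = cycCost c l := by
  unfold cycCost
  rw [show (l.rotate n).rotate 1 = (l.rotate 1).rotate n by
    rw [List.rotate_rotate, List.rotate_rotate, Nat.add_comm]]
  rw [zipWith_rotate _ _ _ _ (by simp)]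
  exact (List.rotate_perm _ n).sum_eq

def pathCost (c : V → V → ℝ) (l : List V) : ℝ := (List.zipWith c l l.tail).sum

lemma zipWith_long (f : V → V → ℝ) (l l' z : List V) (h : l.length = l'.length) :
    List.zipWith f (l ++ z) l' = List.zipWith f l l' := by
  conv_lhs => rw [show l' = l' ++ [] by simp]
  rw [List.zipWith_append h]
  simp

lemma cycCost_eq_pathCost (c : V → V → ℝ) (x : V) (xs : List V) :
    cycCost c (x :: xs) = pathCost c ((x :: xs) ++ [x]) := by
  unfold cycCost pathCost
  have h1 : (x :: xs).rotate 1 = xs ++ [x] := by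
    rw [show (1:ℕ) = 0 + 1 from rfl, List.rotate_cons_succ, List.rotate_zero]
  rw [h1]
  have h2 : ((x :: xs) ++ [x]).tail = xs ++ [x] := rfl
  rw [h2, zipWith_long _ _ _ _ (by simp)]

lemma pathCost_cons_cons (c : V → V → ℝ) (a b : V) (t : List V) :
    pathCost c (a :: b :: t) = c a b + pathCost c (b :: t) := by
  simp [pathCost]

lemma pathCost_append (c : V → V → ℝ) (l₁ : List V) (v : V) (l₂ : List V) :
    pathCost c (l₁ ++ v :: l₂) = pathCost c (l₁ ++ [v]) + pathCost c (v :: l₂) := by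
  induction l₁ with
  | nil => simp [pathCost]
  | cons a l₁ ih =>
    cases l₁ with
    | nil => simp [pathCost_cons_cons, pathCost]
    | cons b l₁' =>
      simp only [List.cons_append, pathCost_cons_cons] at ih ⊢
      rw [ih]; ring

lemma le_pathCost (c : V → V → ℝ) (hc0 : ∀ x y, 0 ≤ c x y)
    (htri : ∀ x y z, c x z ≤ c x y + c y z) :
    ∀ (l : List V) (a b : V), c a b ≤ pathCost c (a :: (l ++ [b]))
  | [], a, b => by simp [pathCost]
  | x :: l, a, b => by
    rw [List.cons_append, pathCost_cons_cons]
    calc c a b ≤ c a x + c x b := htri a x b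
    _ ≤ c a x + pathCost c (x :: (l ++ [b])) :=
        add_le_add le_rfl (le_pathCost c hc0 htri l x b)

lemma cycCost_lb (c : V → V → ℝ) (hc0 : ∀ x y, 0 ≤ c x y) (hrefl : ∀ v, c v v = 0)
    (htri : ∀ x y z, c x z ≤ c x y + c y z) (d v : V) (l : List V)
    (hdl : d ∈ l) (hvl : v ∈ l) : c d v + c v d ≤ cycCost c l := by
  by_cases hvd : v = d
  · subst hvd
    rw [hrefl]
    simpa using cycCost_nonneg c hc0 l
  · obtain ⟨s, t, rfl⟩ := List.append_of_mem hdl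
    have hrot : (s ++ d :: t).rotate s.length = d :: (t ++ s) := by
      rw [List.rotate_eq_drop_append_take (by simp)]
      rw [List.drop_left, List.take_left]
      simp
    have hv2 : v ∈ t ++ s := by
      rcases List.mem_append.1 hvl with h | h
      · exact List.mem_append.2 (Or.inr h)
      · rcases List.mem_cons.1 h with h | h
        · exact absurd h hvd
        · exact List.mem_append.2 (Or.inl h)
    obtain ⟨s', t', hst⟩ := List.append_of_mem hv2
    rw [← cycCost_rotate c _ s.length, hrot, hst, cycCost_eq_pathCost]
    have : (d :: (s' ++ v :: t')) ++ [d] = (d :: s') ++ v :: (t' ++ [d]) := by simp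
    rw [this, pathCost_append]
    have h1 : c d v ≤ pathCost c ((d :: s') ++ [v]) := le_pathCost c hc0 htri s' d v
    have h2 : c v d ≤ pathCost c (v :: (t' ++ [d])) := le_pathCost c hc0 htri t' v d
    exact add_le_add h1 h2

lemma map_add_sum (f g : V → ℝ) (l : List V) :
    (l.map f).sum + (l.map g).sum = (l.map (fun v => f v + g v)).sum := by
  induction l with
  | nil => simp
  | cons a l ih => simp only [List.map_cons, List.sum_cons]; rw [← ih]; ring

lemma cycCost_le_sum (c : V → V → ℝ) (htri : ∀ x y z, c x z ≤ c x y + c y z) (d : V)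
    (l : List V) : cycCost c l ≤ (l.map (fun v => c d v + c v d)).sum := by
  have h1 : cycCost c l ≤ (List.zipWith (fun u v => c u d + c d v) l (l.rotate 1)).sum :=
    sum_zipWith_le _ _ (fun x y => htri x d y) _ _
  rw [sum_zipWith_add (fun u _ => c u d) (fun _ v => c d v) l (l.rotate 1)] at h1
  rw [sum_zipWith_fst _ _ _ (by simp), sum_zipWith_snd _ _ _ (by simp)] at h1
  have h2 : ((l.rotate 1).map (fun v => c d v)).sum = (l.map (fun v => c d v)).sum :=
    ((List.rotate_perm l 1).map _).sum_eq
  rw [h2] at h1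
  calc cycCost c l ≤ (l.map (fun u => c u d)).sum + (l.map (fun v => c d v)).sum := h1
  _ = (l.map (fun v => c d v + c v d)).sum := by
      rw [add_comm ((l.map (fun u => c u d)).sum)]
      exact map_add_sum _ _ l


-- probability layer
variable {V : Type*} [Fintype V] [DecidableEq V]

variable {V : Type*} [Fintype V] [DecidableEq V]

def wt (p : V → ℝ) (A : Finset V) : ℝ := (∏ v ∈ A, p v) * ∏ v ∈ Aᶜ, (1 - p v)

lemma apExpect_eq (p : V → ℝ) (f : Finset V → ℝ) :
    apExpect p f = ∑ A : Finset V, wt p A * f A := rfl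

lemma wt_nonneg {p : V → ℝ} (hp0 : ∀ v, 0 ≤ p v) (hp1 : ∀ v, p v ≤ 1) (A : Finset V) :
    0 ≤ wt p A :=
  mul_nonneg (Finset.prod_nonneg fun v _ => hp0 v)
    (Finset.prod_nonneg fun v _ => by linarith [hp1 v])

lemma wt_eq_zero {p : V → ℝ} {d : V} (hd : p d = 1) {A : Finset V} (h : d ∉ A) :
    wt p A = 0 := by
  have : ∏ v ∈ Aᶜ, (1 - p v) = 0 :=
    Finset.prod_eq_zero (Finset.mem_compl.2 h) (by rw [hd]; ring)
  simp [wt, this]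

lemma apExpect_congr {p : V → ℝ} {f g : Finset V → ℝ} (h : ∀ A, f A = g A) :
    apExpect p f = apExpect p g := by
  simp only [apExpect_eq]; exact Finset.sum_congr rfl fun A _ => by rw [h]

lemma apExpect_mono {p : V → ℝ} (hp0 : ∀ v, 0 ≤ p v) (hp1 : ∀ v, p v ≤ 1)
    {f g : Finset V → ℝ} (h : ∀ A, f A ≤ g A) : apExpect p f ≤ apExpect p g := by
  simp only [apExpect_eq]
  exact Finset.sum_le_sum fun A _ => mul_le_mul_of_nonneg_left (h A) (wt_nonneg hp0 hp1 A)

lemma apExpect_mono_depot {p : V → ℝ} (hp0 : ∀ v, 0 ≤ p v) (hp1 : ∀ v, p v ≤ 1)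
    {d : V} (hd : p d = 1) {f g : Finset V → ℝ} (h : ∀ A, d ∈ A → f A ≤ g A) :
    apExpect p f ≤ apExpect p g := by
  simp only [apExpect_eq]
  refine Finset.sum_le_sum fun A _ => ?_
  by_cases hdA : d ∈ A
  · exact mul_le_mul_of_nonneg_left (h A hdA) (wt_nonneg hp0 hp1 A)
  · rw [wt_eq_zero hd hdA]; simp

lemma apExpect_nonneg {p : V → ℝ} (hp0 : ∀ v, 0 ≤ p v) (hp1 : ∀ v, p v ≤ 1)
    {f : Finset V → ℝ} (h : ∀ A, 0 ≤ f A) : 0 ≤ apExpect p f := by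
  simp only [apExpect_eq]
  exact Finset.sum_nonneg fun A _ => mul_nonneg (wt_nonneg hp0 hp1 A) (h A)

lemma apExpect_sum {ι : Type*} (p : V → ℝ) (s : Finset ι) (F : ι → Finset V → ℝ) :
    apExpect p (fun A => ∑ i ∈ s, F i A) = ∑ i ∈ s, apExpect p (F i) := by
  simp only [apExpect_eq, Finset.mul_sum]
  exact Finset.sum_comm

lemma apExpect_const_mul (p : V → ℝ) (x : ℝ) (f : Finset V → ℝ) :
    apExpect p (fun A => x * f A) = x * apExpect p f := by
  simp only [apExpect_eq, Finset.mul_sum]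
  exact Finset.sum_congr rfl fun A _ => by ring

lemma apExpect_sub (p : V → ℝ) (f g : Finset V → ℝ) :
    apExpect p (fun A => f A - g A) = apExpect p f - apExpect p g := by
  simp only [apExpect_eq, ← Finset.sum_sub_distrib]
  exact Finset.sum_congr rfl fun A _ => by ring

lemma apExpect_prod (p : V → ℝ) (S : Finset V) (a b : V → ℝ) :
    apExpect p (fun A => ∏ v ∈ S, (if v ∈ A then a v else b v)) =
      ∏ v ∈ S, (p v * a v + (1 - p v) * b v) := by
  classical
  have key : ∀ A : Finset V,
      wt p A * ∏ v ∈ S, (if v ∈ A then a v else b v) =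
        (∏ v ∈ A, (p v * (if v ∈ S then a v else 1))) *
          ∏ v ∈ Aᶜ, ((1 - p v) * (if v ∈ S then b v else 1)) := by
    intro A
    rw [Finset.prod_ite (s := S) (p := fun v => v ∈ A) a b]
    rw [Finset.prod_mul_distrib, Finset.prod_mul_distrib]
    rw [Finset.prod_ite_mem A S a, Finset.prod_ite_mem Aᶜ S b]
    rw [Finset.filter_mem_eq_inter]
    have h2 : Finset.filter (fun v => v ∉ A) S = S ∩ Aᶜ := by
      ext x; simp [Finset.mem_filter, Finset.mem_compl]
    rw [h2, Finset.inter_comm S A, Finset.inter_comm S Aᶜ]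
    simp only [wt]; ring
  rw [apExpect_eq]
  rw [Finset.sum_congr rfl fun A _ => key A]
  have := Finset.prod_add (fun v => p v * (if v ∈ S then a v else 1))
    (fun v => (1 - p v) * (if v ∈ S then b v else 1)) (Finset.univ : Finset V)
  rw [Finset.powerset_univ] at this
  have huniv : ∀ t : Finset V, Finset.univ \ t = tᶜ := fun t => by
    ext x; simp
  simp only [huniv] at this
  rw [← this]
  calc ∏ v : V, (p v * (if v ∈ S then a v else 1) + (1 - p v) * (if v ∈ S then b v else 1))
      = ∏ v : V, (if v ∈ S then (p v * a v + (1 - p v) * b v) else 1) :=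
        Finset.prod_congr rfl fun v _ => by by_cases h : v ∈ S <;> simp [h]
    _ = ∏ v ∈ Finset.univ ∩ S, (p v * a v + (1 - p v) * b v) :=
        Finset.prod_ite_mem _ _ _
    _ = ∏ v ∈ S, (p v * a v + (1 - p v) * b v) := by rw [Finset.univ_inter]

lemma apExpect_ind_mem (p : V → ℝ) (v : V) :
    apExpect p (fun A => if v ∈ A then (1:ℝ) else 0) = p v := by
  have h := apExpect_prod p {v} (fun _ => 1) (fun _ => 0)
  simp only [Finset.prod_singleton] at h
  rw [h]; ring

lemma apExpect_ind_pair (p : V → ℝ) {v w : V} (hvw : v ≠ w) :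
    apExpect p (fun A => if v ∈ A ∧ w ∈ A then (1:ℝ) else 0) = p v * p w := by
  have h := apExpect_prod p {v, w} (fun _ => 1) (fun _ => 0)
  simp only [Finset.prod_pair hvw] at h
  rw [apExpect_congr (g := fun A => (if v ∈ A then (1:ℝ) else 0) * if w ∈ A then (1:ℝ) else 0)
    (fun A => by by_cases h1 : v ∈ A <;> by_cases h2 : w ∈ A <;> simp [h1, h2]), h]
  ring

-- TSP bounds
lemma tsp_nonneg (c : V → V → ℝ) (hc0 : ∀ x y, 0 ≤ c x y) (A : Finset V) :
    0 ≤ TSP c A := by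
  refine le_csInf ⟨cycCost c A.toList, A.toList, ⟨A.nodup_toList, A.toList_toFinset⟩, rfl⟩ ?_
  rintro x ⟨l, _, rfl⟩
  exact cycCost_nonneg c hc0 l

lemma tsp_lb (c : V → V → ℝ) (hc0 : ∀ x y, 0 ≤ c x y) (hrefl : ∀ v, c v v = 0)
    (htri : ∀ x y z, c x z ≤ c x y + c y z) {d v : V} {A : Finset V}
    (hdA : d ∈ A) (hvA : v ∈ A) : c d v + c v d ≤ TSP c A := by
  refine le_csInf ⟨cycCost c A.toList, A.toList, ⟨A.nodup_toList, A.toList_toFinset⟩, rfl⟩ ?_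
  rintro x ⟨l, ⟨hnd, hfin⟩, rfl⟩
  exact cycCost_lb c hc0 hrefl htri d v l
    (List.mem_toFinset.1 (hfin ▸ hdA)) (List.mem_toFinset.1 (hfin ▸ hvA))

lemma apExpect_first (p : V → ℝ) (hp0 : ∀ v, 0 ≤ p v) (hp1 : ∀ v, p v ≤ 1)
    (v : V) (Hv : Finset V) (hv : v ∉ Hv) :
    p v * (1 - ∑ w ∈ Hv, p w) ≤
      apExpect p (fun A => if v ∈ A ∧ A ∩ Hv = ∅ then (1:ℝ) else 0) := by
  have key : ∀ A : Finset V,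
      (if v ∈ A then (1:ℝ) else 0) - ∑ w ∈ Hv, (if v ∈ A ∧ w ∈ A then (1:ℝ) else 0)
        ≤ (if v ∈ A ∧ A ∩ Hv = ∅ then (1:ℝ) else 0) := by
    intro A
    by_cases hvA : v ∈ A
    · by_cases hE : A ∩ Hv = ∅
      · have hz : ∀ w ∈ Hv, (if v ∈ A ∧ w ∈ A then (1:ℝ) else 0) = 0 := by
          intro w hw
          have hwA : w ∉ A := fun hwA =>
            (Finset.eq_empty_iff_forall_notMem.1 hE w (Finset.mem_inter.2 ⟨hwA, hw⟩))
          simp [hwA]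
        rw [Finset.sum_congr rfl hz]
        simp [hvA, hE]
      · obtain ⟨w0, hw0⟩ := Finset.nonempty_iff_ne_empty.2 hE
        have hw0A : w0 ∈ A := (Finset.mem_inter.1 hw0).1
        have hw0H : w0 ∈ Hv := (Finset.mem_inter.1 hw0).2
        have h1 : (1:ℝ) ≤ ∑ w ∈ Hv, (if v ∈ A ∧ w ∈ A then (1:ℝ) else 0) := by
          have := Finset.single_le_sum
            (f := fun w => if v ∈ A ∧ w ∈ A then (1:ℝ) else 0)
            (fun w _ => by by_cases h : v ∈ A ∧ w ∈ A <;> simp [h]) hw0H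
          simpa [hvA, hw0A] using this
        rw [if_neg (fun h : v ∈ A ∧ A ∩ Hv = ∅ => hE h.2), if_pos hvA]
        linarith
    · simp [hvA]
  calc p v * (1 - ∑ w ∈ Hv, p w) = p v - ∑ w ∈ Hv, p v * p w := by
        rw [mul_sub, mul_one, Finset.mul_sum]
    _ = apExpect p (fun A => if v ∈ A then (1:ℝ) else 0)
        - ∑ w ∈ Hv, apExpect p (fun A => if v ∈ A ∧ w ∈ A then (1:ℝ) else 0) := by
        rw [apExpect_ind_mem]
        congr 1
        exact (Finset.sum_congr rfl fun w hw =>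
          apExpect_ind_pair p (fun h => hv (by rw [h]; exact hw))).symm
    _ = apExpect p (fun A => (if v ∈ A then (1:ℝ) else 0)
        - ∑ w ∈ Hv, (if v ∈ A ∧ w ∈ A then (1:ℝ) else 0)) := by
        rw [apExpect_sub, apExpect_sum]
    _ ≤ _ := apExpect_mono hp0 hp1 key

lemma sum_first_le (T : Finset V) (Tv : V → Finset V)
    (hcomp : ∀ v w, v ∈ T → w ∈ T → v ≠ w → v ∈ Tv w ∨ w ∈ Tv v)
    (φ : V → ℝ) (hφ : ∀ v, 0 ≤ φ v) (B : ℝ) (hB : 0 ≤ B) (A : Finset V)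
    (hφB : ∀ v ∈ T, v ∈ A → φ v ≤ B) :
    ∑ v ∈ T, φ v * (if v ∈ A ∧ A ∩ Tv v = ∅ then (1:ℝ) else 0) ≤ B := by
  by_cases hex : ∃ v ∈ T, v ∈ A ∧ A ∩ Tv v = ∅
  · obtain ⟨v0, hv0T, hv0⟩ := hex
    rw [Finset.sum_eq_single_of_mem v0 hv0T ?_]
    · rw [if_pos hv0, mul_one]
      exact hφB v0 hv0T hv0.1
    · intro w hwT hne
      rw [if_neg, mul_zero]
      rintro ⟨hwA, hwE⟩
      rcases hcomp w v0 hwT hv0T hne with h | h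
      · exact Finset.eq_empty_iff_forall_notMem.1 hv0.2 w (Finset.mem_inter.2 ⟨hwA, h⟩)
      · exact Finset.eq_empty_iff_forall_notMem.1 hwE v0 (Finset.mem_inter.2 ⟨hv0.1, h⟩)
  · push_neg at hex
    rw [Finset.sum_eq_zero]
    · exact hB
    · intro v hvT
      by_cases hvA : v ∈ A
      · rw [if_neg, mul_zero]
        rintro ⟨h1, h2⟩
        exact (hex v hvT h1).ne_empty h2
      · simp [hvA]

lemma sum_mul_prefix (p : V → ℝ) (hp0 : ∀ v, 0 ≤ p v) (T : Finset V) (ord : V → ℕ) :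
    ∑ v ∈ T, p v * (∑ w ∈ T.filter (fun w => ord w < ord v), p w)
      ≤ (∑ v ∈ T, p v) ^ 2 / 2 := by
  have hF : ∀ v ∈ T, p v * (∑ w ∈ T.filter (fun w => ord w < ord v), p w)
      = ∑ w ∈ T, (if ord w < ord v then p v * p w else 0) := by
    intro v _
    rw [Finset.sum_filter, Finset.mul_sum]
    exact Finset.sum_congr rfl fun w _ => by split <;> simp
  rw [Finset.sum_congr rfl hF]
  set F : V → V → ℝ := fun v w => if ord w < ord v then p v * p w else 0 with hFdef
  have hsw : ∑ v ∈ T, ∑ w ∈ T, F v w = ∑ v ∈ T, ∑ w ∈ T, F w v := Finset.sum_comm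
  have hpt : ∀ v ∈ T, ∀ w ∈ T, F v w + F w v ≤ p v * p w := by
    intro v _ w _
    rw [hFdef]
    dsimp only
    rcases lt_trichotomy (ord w) (ord v) with h | h | h
    · rw [if_pos h, if_neg (by omega)]
      simp
    · rw [if_neg (by omega), if_neg (by omega)]
      simpa using mul_nonneg (hp0 v) (hp0 w)
    · rw [if_neg (by omega), if_pos h]
      simp [mul_comm]
  have key : (∑ v ∈ T, ∑ w ∈ T, F v w) + (∑ v ∈ T, ∑ w ∈ T, F v w)
      ≤ ∑ v ∈ T, ∑ w ∈ T, p v * p w := by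
    nth_rewrite 2 [hsw]
    rw [← Finset.sum_add_distrib]
    refine Finset.sum_le_sum fun v hv => ?_
    rw [← Finset.sum_add_distrib]
    exact Finset.sum_le_sum fun w hw => hpt v hv w hw
  have hsq : ∑ v ∈ T, ∑ w ∈ T, p v * p w = (∑ v ∈ T, p v) ^ 2 := by
    rw [← Finset.sum_mul_sum]
    ring
  rw [hsq] at key
  linarith

end AP

/-- for an instance with a depot, every a priori tour has expected short-cut
cost at most `6·p(V)` times the expected cost of an optimal a posteriori tour. -/
theorem statement11 {V : Type*} [Fintype V] [DecidableEq V]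
    (c : V → V → ℝ) (p : V → ℝ)
    (hc0 : ∀ x y, 0 ≤ c x y)
    (hcrefl : ∀ v, c v v = 0)
    (htri : ∀ x y z, c x z ≤ c x y + c y z)
    (hp0 : ∀ v, 0 ≤ p v) (hp1 : ∀ v, p v ≤ 1)
    (d : V) (hd : p d = 1)
    (T : List V) (hT : IsTour Finset.univ T) :
    apExpect p (fun A => cycCost c (shortcut T A)) ≤
      6 * (∑ v, p v) * apExpect p (fun A => TSP c A) := by
  classical
  obtain ⟨hTnd, hTfin⟩ := hT
  set r : V → ℝ := fun v => c d v + c v d with hrdef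
  have hr0 : ∀ v, 0 ≤ r v := fun v => add_nonneg (hc0 _ _) (hc0 _ _)
  set E := apExpect p (fun A => TSP c A) with hEdef
  have hE0 : 0 ≤ E := AP.apExpect_nonneg hp0 hp1 fun A => AP.tsp_nonneg c hc0 A
  have hP1 : (1:ℝ) ≤ ∑ v, p v := by
    rw [← hd]; exact Finset.single_le_sum (fun v _ => hp0 v) (Finset.mem_univ d)
  have hP0 : (0:ℝ) ≤ ∑ v, p v := le_trans zero_le_one hP1
  have hrle : ∀ {A : Finset V}, d ∈ A → ∀ {v : V}, v ∈ A → r v ≤ TSP c A :=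
    fun hdA _ hvA => AP.tsp_lb c hc0 hcrefl htri hdA hvA
  -- an arbitrary linear order on V
  set ord : V → ℕ := fun v => ((Fintype.equivFin V) v : ℕ) with horddef
  have hordinj : Function.Injective ord := fun a b h => by
    have := Fin.val_injective h
    exact (Fintype.equivFin V).injective this
  have hcomp : ∀ (S : Finset V) (v w : V), v ∈ S → w ∈ S → v ≠ w →
      v ∈ S.filter (fun u => ord u < ord w) ∨ w ∈ S.filter (fun u => ord u < ord v) := by
    intro S v w hv hw hne
    rcases lt_or_gt_of_ne (fun h : ord v = ord w => hne (hordinj h)) with h | h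
    · exact Or.inl (Finset.mem_filter.2 ⟨hv, h⟩)
    · exact Or.inr (Finset.mem_filter.2 ⟨hw, h⟩)
  have hnotself : ∀ (S : Finset V) (v : V), v ∉ S.filter (fun u => ord u < ord v) := by
    intro S v h
    exact absurd (Finset.mem_filter.1 h).2 (lt_irrefl _)
  -- LHS bound : expected shortcut cost ≤ ∑ p v * r v
  have hL : apExpect p (fun A => cycCost c (shortcut T A)) ≤ ∑ v, p v * r v := by
    have step1 : ∀ A : Finset V, cycCost c (shortcut T A) ≤ ∑ v ∈ A, r v := by
      intro A
      have hnd : (shortcut T A).Nodup := hTnd.filter _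
      have hfin : (shortcut T A).toFinset = A := by
        show (T.filter (fun v => v ∈ A)).toFinset = A
        rw [List.toFinset_filter, hTfin]
        ext x; simp
      calc cycCost c (shortcut T A)
          ≤ ((shortcut T A).map (fun v => c d v + c v d)).sum :=
            AP.cycCost_le_sum c htri d (shortcut T A)
        _ = ∑ v ∈ (shortcut T A).toFinset, r v := (List.sum_toFinset _ hnd).symm
        _ = ∑ v ∈ A, r v := by rw [hfin]
    calc apExpect p (fun A => cycCost c (shortcut T A))
        ≤ apExpect p (fun A => ∑ v ∈ A, r v) := AP.apExpect_mono hp0 hp1 step1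
      _ = apExpect p (fun A => ∑ v : V, r v * (if v ∈ A then (1:ℝ) else 0)) := by
          refine AP.apExpect_congr fun A => ?_
          symm
          simp only [mul_ite, mul_one, mul_zero]
          rw [Finset.sum_ite_mem, Finset.univ_inter]
      _ = ∑ v : V, apExpect p (fun A => r v * (if v ∈ A then (1:ℝ) else 0)) :=
          AP.apExpect_sum p Finset.univ _
      _ = ∑ v, p v * r v := by
          refine Finset.sum_congr rfl fun v _ => ?_
          rw [AP.apExpect_const_mul, AP.apExpect_ind_mem]
          ring
  -- the threshold t
  set D : Finset ℝ := (insert 0 (Finset.univ.image r)).filter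
      (fun x => (∑ v ∈ Finset.univ.filter (fun v => x < r v), p v) ≤ 1/2) with hDdef
  have hC0 : (0:ℝ) ∈ insert 0 (Finset.univ.image r) := Finset.mem_insert_self _ _
  have hCne : (insert (0:ℝ) (Finset.univ.image r)).Nonempty := ⟨0, hC0⟩
  have hCr : ∀ v, r v ∈ insert 0 (Finset.univ.image r) := fun v =>
    Finset.mem_insert_of_mem (Finset.mem_image_of_mem r (Finset.mem_univ v))
  have hDne : D.Nonempty := by
    refine ⟨(insert 0 (Finset.univ.image r)).max' hCne,
      Finset.mem_filter.2 ⟨Finset.max'_mem _ hCne, ?_⟩⟩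
    have hemp : Finset.univ.filter
        (fun v => (insert 0 (Finset.univ.image r)).max' hCne < r v) = ∅ := by
      refine Finset.filter_eq_empty_iff.2 fun v _ => ?_
      exact not_lt.2 (Finset.le_max' _ _ (hCr v))
    rw [hemp]
    norm_num
  set t : ℝ := D.min' hDne with htdef
  have htD : t ∈ D := Finset.min'_mem D hDne
  rw [hDdef, Finset.mem_filter] at htD
  obtain ⟨htC, htps⟩ := htD
  have ht0 : 0 ≤ t := by
    rcases Finset.mem_insert.1 htC with h | h
    · exact le_of_eq h.symm
    · obtain ⟨v, _, hv⟩ := Finset.mem_image.1 h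
      exact hv ▸ hr0 v
  -- Part 1 : heavy vertices
  have part1 : ∑ v ∈ Finset.univ.filter (fun v => t < r v), p v * r v ≤ 2 * E := by
    set H := Finset.univ.filter (fun v => t < r v) with hHdef
    have hEge : apExpect p (fun A => ∑ v ∈ H, r v *
        (if v ∈ A ∧ A ∩ (H.filter (fun u => ord u < ord v)) = ∅ then (1:ℝ) else 0)) ≤ E := by
      refine AP.apExpect_mono_depot hp0 hp1 hd fun A hdA => ?_
      exact AP.sum_first_le H (fun v => H.filter (fun u => ord u < ord v))
        (fun v w hv hw hne => hcomp H v w hv hw hne) r hr0 (TSP c A)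
        (AP.tsp_nonneg c hc0 A) A (fun v _ hvA => hrle hdA hvA)
    have hlow : ∑ v ∈ H, r v * (p v * (1 - ∑ w ∈ H.filter (fun u => ord u < ord v), p w))
        ≤ apExpect p (fun A => ∑ v ∈ H, r v *
          (if v ∈ A ∧ A ∩ (H.filter (fun u => ord u < ord v)) = ∅ then (1:ℝ) else 0)) := by
      rw [AP.apExpect_sum]
      refine Finset.sum_le_sum fun v _ => ?_
      rw [AP.apExpect_const_mul]
      exact mul_le_mul_of_nonneg_left
        (AP.apExpect_first p hp0 hp1 v _ (hnotself H v)) (hr0 v)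
    have hhalf : ∀ v ∈ H, (1/2 : ℝ) * (p v * r v)
        ≤ r v * (p v * (1 - ∑ w ∈ H.filter (fun u => ord u < ord v), p w)) := by
      intro v _
      have h1 : ∑ w ∈ H.filter (fun u => ord u < ord v), p w ≤ ∑ w ∈ H, p w :=
        Finset.sum_le_sum_of_subset_of_nonneg (Finset.filter_subset _ _)
          (fun w _ _ => hp0 w)
      have h2 : ∑ w ∈ H, p w ≤ 1/2 := htps
      nlinarith [mul_nonneg (mul_nonneg (hr0 v) (hp0 v))
        (show (0:ℝ) ≤ 1/2 - ∑ w ∈ H.filter (fun u => ord u < ord v), p w by linarith)]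
    have hsum : (1/2 : ℝ) * ∑ v ∈ H, p v * r v
        ≤ ∑ v ∈ H, r v * (p v * (1 - ∑ w ∈ H.filter (fun u => ord u < ord v), p w)) := by
      rw [Finset.mul_sum]
      exact Finset.sum_le_sum hhalf
    linarith
  -- Part 2 : t ≤ 3 E
  have part2 : t ≤ 3 * E := by
    rcases eq_or_lt_of_le ht0 with h0 | htpos
    · rw [← h0]; linarith
    · set C' : Finset ℝ := (insert 0 (Finset.univ.image r)).filter (fun x => x < t) with hC'def
      have hC'ne : C'.Nonempty := ⟨0, Finset.mem_filter.2 ⟨hC0, htpos⟩⟩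
      set x0 : ℝ := C'.max' hC'ne with hx0def
      have hx0mem : x0 ∈ C' := Finset.max'_mem C' hC'ne
      rw [hC'def, Finset.mem_filter] at hx0mem
      obtain ⟨hx0C, hx0t⟩ := hx0mem
      have hx0D : x0 ∉ D := fun h => absurd (Finset.min'_le D x0 h) (not_le.2 hx0t)
      have hx0ps : 1/2 < ∑ v ∈ Finset.univ.filter (fun v => x0 < r v), p v := by
        by_contra h
        push_neg at h
        exact hx0D (by rw [hDdef]; exact Finset.mem_filter.2 ⟨hx0C, h⟩)
      have hH't : ∀ v, x0 < r v → t ≤ r v := by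
        intro v hv
        by_contra hlt
        push_neg at hlt
        have h1 : r v ∈ C' := by rw [hC'def]; exact Finset.mem_filter.2 ⟨hCr v, hlt⟩
        exact absurd hv (not_lt.2 (Finset.le_max' C' _ h1))
      -- minimal subset with weight > 1/2
      obtain ⟨T', hT'mem, hT'min⟩ := Finset.exists_min_image
        (((Finset.univ.filter (fun v => x0 < r v)).powerset).filter
          (fun S => 1/2 < ∑ v ∈ S, p v)) Finset.card
        ⟨Finset.univ.filter (fun v => x0 < r v),
          Finset.mem_filter.2 ⟨Finset.mem_powerset_self _, hx0ps⟩⟩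
      rw [Finset.mem_filter, Finset.mem_powerset] at hT'mem
      obtain ⟨hT'sub, hT'half⟩ := hT'mem
      have hT'ne : T'.Nonempty := by
        rcases T'.eq_empty_or_nonempty with h | h
        · rw [h] at hT'half; simp at hT'half; linarith
        · exact h
      obtain ⟨v1, hv1⟩ := hT'ne
      have herase : ∑ v ∈ T'.erase v1, p v ≤ 1/2 := by
        by_contra h
        push_neg at h
        have hmem2 : T'.erase v1 ∈ ((Finset.univ.filter (fun v => x0 < r v)).powerset).filter
            (fun S => 1/2 < ∑ v ∈ S, p v) :=
          Finset.mem_filter.2 ⟨Finset.mem_powerset.2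
            ((Finset.erase_subset _ _).trans hT'sub), h⟩
        have hcard := hT'min _ hmem2
        rw [Finset.card_erase_of_mem hv1] at hcard
        have hpos : 0 < T'.card := Finset.card_pos.2 ⟨v1, hv1⟩
        omega
      have hT'32 : ∑ v ∈ T', p v ≤ 3/2 := by
        rw [← Finset.add_sum_erase T' p hv1]
        linarith [hp1 v1]
      -- lower bound E via first active vertex of T'
      have hEge : apExpect p (fun A => ∑ v ∈ T', t *
          (if v ∈ A ∧ A ∩ (T'.filter (fun u => ord u < ord v)) = ∅ then (1:ℝ) else 0)) ≤ E := by
        refine AP.apExpect_mono_depot hp0 hp1 hd fun A hdA => ?_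
        refine AP.sum_first_le T' (fun v => T'.filter (fun u => ord u < ord v))
          (fun v w hv hw hne => hcomp T' v w hv hw hne) (fun _ => t) (fun _ => ht0)
          (TSP c A) (AP.tsp_nonneg c hc0 A) A (fun v hvT hvA => ?_)
        have hvH : x0 < r v := (Finset.mem_filter.1 (hT'sub hvT)).2
        exact le_trans (hH't v hvH) (hrle hdA hvA)
      have hlow : ∑ v ∈ T', t * (p v * (1 - ∑ w ∈ T'.filter (fun u => ord u < ord v), p w))
          ≤ apExpect p (fun A => ∑ v ∈ T', t *
            (if v ∈ A ∧ A ∩ (T'.filter (fun u => ord u < ord v)) = ∅ then (1:ℝ) else 0)) := by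
        rw [AP.apExpect_sum]
        refine Finset.sum_le_sum fun v _ => ?_
        rw [AP.apExpect_const_mul]
        exact mul_le_mul_of_nonneg_left
          (AP.apExpect_first p hp0 hp1 v _ (hnotself T' v)) ht0
      have hpair : ∑ v ∈ T', p v * (∑ w ∈ T'.filter (fun w => ord w < ord v), p w)
          ≤ (∑ v ∈ T', p v) ^ 2 / 2 := AP.sum_mul_prefix p hp0 T' ord
      have hsum_eq : ∑ v ∈ T', t * (p v * (1 - ∑ w ∈ T'.filter (fun u => ord u < ord v), p w))
          = t * (∑ v ∈ T', p v)
            - t * ∑ v ∈ T', p v * (∑ w ∈ T'.filter (fun u => ord u < ord v), p w) := by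
        rw [Finset.mul_sum, Finset.mul_sum, ← Finset.sum_sub_distrib]
        exact Finset.sum_congr rfl fun v _ => by ring
      have h13 : t * (1/3 : ℝ) ≤ t * ((∑ v ∈ T', p v) - (∑ v ∈ T', p v) ^ 2 / 2) := by
        refine mul_le_mul_of_nonneg_left ?_ ht0
        nlinarith [hT'half, hT'32]
      have h2 : t * ((∑ v ∈ T', p v) - (∑ v ∈ T', p v) ^ 2 / 2)
          ≤ t * (∑ v ∈ T', p v)
            - t * ∑ v ∈ T', p v * (∑ w ∈ T'.filter (fun u => ord u < ord v), p w) := by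
        have := mul_le_mul_of_nonneg_left hpair ht0
        nlinarith
      rw [hsum_eq] at hlow
      linarith
  -- assemble
  have hsplit : ∑ v, p v * r v = (∑ v ∈ Finset.univ.filter (fun v => t < r v), p v * r v)
      + ∑ v ∈ Finset.univ.filter (fun v => ¬ t < r v), p v * r v :=
    (Finset.sum_filter_add_sum_filter_not Finset.univ (fun v => t < r v) _).symm
  have hlowsum : ∑ v ∈ Finset.univ.filter (fun v => ¬ t < r v), p v * r v
      ≤ t * ∑ v, p v := by
    calc ∑ v ∈ Finset.univ.filter (fun v => ¬ t < r v), p v * r v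
        ≤ ∑ v ∈ Finset.univ.filter (fun v => ¬ t < r v), p v * t :=
          Finset.sum_le_sum fun v hv => mul_le_mul_of_nonneg_left
            (not_lt.1 (Finset.mem_filter.1 hv).2) (hp0 v)
      _ = (∑ v ∈ Finset.univ.filter (fun v => ¬ t < r v), p v) * t := by
          rw [Finset.sum_mul]
      _ ≤ (∑ v, p v) * t := mul_le_mul_of_nonneg_right
          (Finset.sum_le_sum_of_subset_of_nonneg (Finset.filter_subset _ _)
            fun v _ _ => hp0 v) ht0
      _ = t * ∑ v, p v := mul_comm _ _
  nlinarith [hL, hsplit, part1, hlowsum, part2, hE0, hP1, hP0, ht0,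
    mul_nonneg (sub_nonneg.2 part2) hP0, mul_nonneg hE0 (sub_nonneg.2 hP1),
    mul_nonneg hE0 hP0]
end
end
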